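/- arXiv:1311.4635 — 6 statements merged into one kernel-verified Lean document; each statement's English description precedes it below -/
import Mathlib

section
/- Let $\{z_n\}$ and $\{M_n\}$ be sequences of nonnegative reals with $M_n \le M_{n-1}$ for all $n \ge 1$. Suppose there exist constants $0<\theta<1$, $0<\beta<1$, $A \ge C > 0$, and a positive integer $T$ such that for all $n\ge 1$: (1) if $z_n \ge A M_{n-1}$ then $z_{n+1} \le \theta z_n$; (2) if $z_n < A M_{n-1}$ then $M_{n+T} \le \beta M_{n-1}$; (3) $z_{n+1} \le \theta \max\{z_n, C M_{n-1}\}$. Then there exist constants $c>0$ and $0<\mu<1$ such that $z_n + M_n \le c\,\mu^n$ for all $n$. -/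
/-!
Consider the envelope `V m = max (z (m + 1)) (C * M m)`. Condition (3) and the monotonicity of
`M` make `V` non-increasing and give `z (m + j + 2) ≤ θ V m` for every `j`. Looking at the single
index `m + 2`: either `z (m + 2) ≥ A M (m + 1)`, and then `C M (m + 1) ≤ z (m + 2) ≤ θ V m`, or
condition (2) gives `M (m + 2 + T) ≤ β M (m + 1)`. Either way `V` contracts by `max θ β` over
every block of `T + 2` steps, hence decays geometrically, and `z (m + 1) + M (m + 1)` is at most
`(1 + 1 / C) V m`.
-/

theorem le_pow_div_mul_of_le_mul_shift {V : ℕ → ℝ} {γ : ℝ} {K : ℕ} (hV : Antitone V)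
    (hγ : 0 ≤ γ) (h : ∀ m, V (m + K) ≤ γ * V m) (n : ℕ) : V n ≤ γ ^ (n / K) * V 0 := by
  have hblock : ∀ j, V (j * K) ≤ γ ^ j * V 0 := by
    intro j
    induction j with
    | zero => simp
    | succ j ih =>
      calc V ((j + 1) * K) = V (j * K + K) := by rw [add_mul, one_mul]
        _ ≤ γ * V (j * K) := h _
        _ ≤ γ * (γ ^ j * V 0) := mul_le_mul_of_nonneg_left ih hγ
        _ = γ ^ (j + 1) * V 0 := by ring
  exact (hV (Nat.div_mul_le_self n K)).trans (hblock _)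

theorem exists_le_mul_pow_of_le_mul_shift {V : ℕ → ℝ} {γ : ℝ} {K : ℕ} (hV : Antitone V)
    (hV0 : 0 ≤ V 0) (hγ0 : 0 < γ) (hγ1 : γ < 1) (hK : 0 < K)
    (h : ∀ m, V (m + K) ≤ γ * V m) :
    ∃ μ : ℝ, 0 < μ ∧ μ < 1 ∧ ∀ n, V n ≤ V 0 / γ * μ ^ n := by
  set μ : ℝ := γ ^ ((K : ℝ)⁻¹)
  have hμ0 : 0 < μ := Real.rpow_pos_of_pos hγ0 _
  have hμ1 : μ < 1 := Real.rpow_lt_one hγ0.le hγ1 (by positivity)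
  have hμK : μ ^ K = γ := Real.rpow_inv_natCast_pow hγ0.le hK.ne'
  refine ⟨μ, hμ0, hμ1, fun n => ?_⟩
  have hpow : γ ^ (n / K) ≤ μ ^ n / γ := by
    rw [le_div_iff₀ hγ0, ← pow_succ, ← hμK, ← pow_mul]
    exact pow_le_pow_of_le_one hμ0.le hμ1.le (Nat.lt_mul_div_succ n hK).le
  calc V n ≤ γ ^ (n / K) * V 0 := le_pow_div_mul_of_le_mul_shift hV hγ0.le h n
    _ ≤ μ ^ n / γ * V 0 := mul_le_mul_of_nonneg_right hpow hV0
    _ = V 0 / γ * μ ^ n := by ring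

theorem exists_pos_le_mul_pow_of_succ {f : ℕ → ℝ} {c μ : ℝ} (hμ : 0 < μ)
    (h : ∀ n, f (n + 1) ≤ c * μ ^ n) : ∃ c' > 0, ∀ n, f n ≤ c' * μ ^ n := by
  refine ⟨max (max (f 0) (c / μ)) 1, by positivity, ?_⟩
  rintro (_ | n)
  · simp
  · calc f (n + 1) ≤ c / μ * μ ^ (n + 1) := by
          rw [pow_succ, div_mul_eq_mul_div, mul_div_assoc, mul_div_cancel_right₀ _ hμ.ne']
          exact h n
      _ ≤ max (max (f 0) (c / μ)) 1 * μ ^ (n + 1) := by gcongr; simp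

namespace DecayIteration

def envelope (z M : ℕ → ℝ) (C : ℝ) (m : ℕ) : ℝ := max (z (m + 1)) (C * M m)

variable {z M : ℕ → ℝ} {θ β A C : ℝ}

theorem envelope_nonneg (hM0 : ∀ n, 0 ≤ M n) (hC : 0 ≤ C) (m : ℕ) : 0 ≤ envelope z M C m :=
  le_max_of_le_right (mul_nonneg hC (hM0 m))

theorem envelope_antitone (hM0 : ∀ n, 0 ≤ M n) (hM : Antitone M) (hC : 0 ≤ C) (hθ1 : θ ≤ 1)
    (h3 : ∀ m, z (m + 2) ≤ θ * envelope z M C m) : Antitone (envelope z M C) := by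
  refine antitone_nat_of_succ_le fun m => max_le ?_ ?_
  · calc z (m + 2) ≤ θ * envelope z M C m := h3 m
      _ ≤ envelope z M C m := mul_le_of_le_one_left (envelope_nonneg hM0 hC m) hθ1
  · calc C * M (m + 1) ≤ C * M m := mul_le_mul_of_nonneg_left (hM m.le_succ) hC
      _ ≤ envelope z M C m := le_max_right _ _

theorem envelope_add_le (T : ℕ) (hM0 : ∀ n, 0 ≤ M n) (hM : Antitone M) (hC : 0 ≤ C)
    (hθ0 : 0 ≤ θ) (hθ1 : θ ≤ 1) (hCA : C ≤ A)
    (h2 : ∀ m, z (m + 1) < A * M m → M (m + 1 + T) ≤ β * M m)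
    (h3 : ∀ m, z (m + 2) ≤ θ * envelope z M C m) (m : ℕ) :
    envelope z M C (m + (T + 2)) ≤ max θ β * envelope z M C m := by
  have hV := envelope_antitone hM0 hM hC hθ1 h3
  have hVm := envelope_nonneg (z := z) hM0 hC m
  have hθV : ∀ k, z (m + k + 2) ≤ max θ β * envelope z M C m := fun k =>
    calc z (m + k + 2) ≤ θ * envelope z M C (m + k) := h3 _
      _ ≤ θ * envelope z M C m := mul_le_mul_of_nonneg_left (hV (m.le_add_right k)) hθ0
      _ ≤ max θ β * envelope z M C m := mul_le_mul_of_nonneg_right (le_max_left _ _) hVm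
  refine max_le ?_ ?_
  · have hz := hθV (T + 1)
    rwa [show m + (T + 1) + 2 = m + (T + 2) + 1 by omega] at hz
  · rcases le_or_gt (A * M (m + 1)) (z (m + 2)) with hbig | hsmall
    · calc C * M (m + (T + 2)) ≤ C * M (m + 1) := mul_le_mul_of_nonneg_left (hM (by omega)) hC
        _ ≤ A * M (m + 1) := mul_le_mul_of_nonneg_right hCA (hM0 _)
        _ ≤ z (m + 0 + 2) := hbig
        _ ≤ max θ β * envelope z M C m := hθV 0
    · have hγ : 0 ≤ max θ β := le_max_of_le_left hθ0
      calc C * M (m + (T + 2)) = C * M (m + 1 + 1 + T) := by rw [add_comm T 2, ← add_assoc]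
        _ ≤ C * (β * M (m + 1)) := mul_le_mul_of_nonneg_left (h2 _ hsmall) hC
        _ ≤ C * (max θ β * M m) := by
            refine mul_le_mul_of_nonneg_left ?_ hC
            calc β * M (m + 1) ≤ max θ β * M (m + 1) :=
                  mul_le_mul_of_nonneg_right (le_max_right _ _) (hM0 _)
              _ ≤ max θ β * M m := mul_le_mul_of_nonneg_left (hM m.le_succ) hγ
        _ = max θ β * (C * M m) := by ring
        _ ≤ max θ β * envelope z M C m := mul_le_mul_of_nonneg_left (le_max_right _ _) hγ

theorem add_le_envelope (hM : Antitone M) (hC : 0 < C) (m : ℕ) :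
    z (m + 1) + M (m + 1) ≤ (1 + C⁻¹) * envelope z M C m := by
  have hMm : M (m + 1) ≤ C⁻¹ * envelope z M C m := by
    rw [← div_eq_inv_mul, le_div_iff₀' hC]
    exact (mul_le_mul_of_nonneg_left (hM m.le_succ) hC.le).trans (le_max_right _ _)
  have hzm : z (m + 1) ≤ envelope z M C m := le_max_left _ _
  linarith

end DecayIteration

open DecayIteration

theorem stmt_0_general (z M : ℕ → ℝ) (hM : ∀ n, 0 ≤ M n)
    (hmono : ∀ n, 1 ≤ n → M n ≤ M (n - 1))
    (θ β A C : ℝ) (T : ℕ)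
    (hθ0 : 0 < θ) (hθ1 : θ < 1) (hβ1 : β < 1)
    (hC : 0 < C) (hCA : C ≤ A)
    (h2 : ∀ n, 1 ≤ n → z n < A * M (n - 1) → M (n + T) ≤ β * M (n - 1))
    (h3 : ∀ n, 1 ≤ n → z (n + 1) ≤ θ * max (z n) (C * M (n - 1))) :
    ∃ c > 0, ∃ μ : ℝ, 0 < μ ∧ μ < 1 ∧ ∀ n, z n + M n ≤ c * μ ^ n := by
  have hanti : Antitone M :=
    antitone_nat_of_succ_le fun n => by simpa using hmono (n + 1) le_add_self
  have h2' : ∀ m, z (m + 1) < A * M m → M (m + 1 + T) ≤ β * M m := fun m => by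
    simpa using h2 (m + 1) le_add_self
  have h3' : ∀ m, z (m + 2) ≤ θ * envelope z M C m := fun m => h3 (m + 1) le_add_self
  obtain ⟨μ, hμ0, hμ1, hdecay⟩ := exists_le_mul_pow_of_le_mul_shift
    (envelope_antitone hM hanti hC.le hθ1.le h3') (envelope_nonneg hM hC.le 0)
    (lt_max_of_lt_left hθ0) (max_lt hθ1 hβ1) (Nat.succ_pos (T + 1))
    (envelope_add_le T hM hanti hC.le hθ0.le hθ1.le hCA h2' h3')
  obtain ⟨c, hc, hbound⟩ := exists_pos_le_mul_pow_of_succ (f := fun n => z n + M n) hμ0 fun m =>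
    (add_le_envelope hanti hC m).trans <| by
      rw [mul_assoc]
      exact mul_le_mul_of_nonneg_left (hdecay m) (by positivity)
  exact ⟨c, hc, μ, hμ0, hμ1, hbound⟩

/-- Abstract iteration lemma: exponential decay of `z n + M n`. -/
theorem stmt_0 (z M : ℕ → ℝ) (hz : ∀ n, 0 ≤ z n) (hM : ∀ n, 0 ≤ M n)
    (hmono : ∀ n, 1 ≤ n → M n ≤ M (n - 1))
    (θ β A C : ℝ) (T : ℕ)
    (hθ0 : 0 < θ) (hθ1 : θ < 1) (hβ0 : 0 < β) (hβ1 : β < 1)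
    (hC : 0 < C) (hCA : C ≤ A) (hT : 0 < T)
    (h1 : ∀ n, 1 ≤ n → A * M (n - 1) ≤ z n → z (n + 1) ≤ θ * z n)
    (h2 : ∀ n, 1 ≤ n → z n < A * M (n - 1) → M (n + T) ≤ β * M (n - 1))
    (h3 : ∀ n, 1 ≤ n → z (n + 1) ≤ θ * max (z n) (C * M (n - 1))) :
    ∃ c > 0, ∃ μ : ℝ, 0 < μ ∧ μ < 1 ∧ ∀ n, z n + M n ≤ c * μ ^ n :=
  stmt_0_general z M hM hmono θ β A C T hθ0 hθ1 hβ1 hC hCA h2 h3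
end

section
/- Let $v > 0$ be fixed. Then $\lim_{\epsilon \to 0^+} \frac{3^{1/2}}{2\pi^{1/2}} \int_0^{\epsilon} \frac{1}{s^{3/2}} \exp\left(-\frac{3|x_\epsilon - s v|^2}{4 s^3}\right) ds = \frac{1}{v}$, for any family $x_\epsilon > 0$ with $x_\epsilon/\epsilon \to 0$ as $\epsilon \to 0^+$. -/
/-!
With `t = (s v - x) / s^{3/2}` the exponent of the kernel becomes `3 t² / 4`, and on the window
`|s v - x| ≤ η x` the weight `s^{-3/2}` is `dt/ds` times a factor between `2(1-η)/(v(2+η))` and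
`2(1+η)/(v(2-η))`. As `x → 0` the window is mapped onto all of `ℝ`, so its contribution tends to
that factor times `∫ exp(-3t²/4) dt = 2√π/√3`. Outside the window `|x - s v| ≥ η v s / 2`, so the
exponent is at least of order `η² v² / s`, the kernel is `O(√s)` there and the rest of the integral
is `O(ε^{3/2})`. Letting `η → 0` gives `1/v`.
-/

open Real Filter Topology Set MeasureTheory

lemma tendsto_of_squeeze_family {α ι β : Type*} [TopologicalSpace β] [LinearOrder β]
    [OrderTopology β] {l : Filter α} {p : Filter ι} [p.NeBot] {f : α → β} {lo hi : ι → β} {L : β}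
    (hlo : Tendsto lo p (𝓝 L)) (hhi : Tendsto hi p (𝓝 L))
    (h : ∀ᶠ i in p, ∃ g₁ g₂ : α → β, Tendsto g₁ l (𝓝 (lo i)) ∧ Tendsto g₂ l (𝓝 (hi i)) ∧
      ∀ᶠ a in l, g₁ a ≤ f a ∧ f a ≤ g₂ a) :
    Tendsto f l (𝓝 L) := by
  rw [tendsto_order]
  constructor
  · intro c hc
    obtain ⟨i, hci, g₁, _, hg₁, _, hfg⟩ := ((hlo.eventually (lt_mem_nhds hc)).and h).exists
    filter_upwards [hg₁.eventually (lt_mem_nhds hci), hfg] with a h₁ h₂ using h₁.trans_le h₂.1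
  · intro c hc
    obtain ⟨i, hci, _, g₂, _, hg₂, hfg⟩ := ((hhi.eventually (gt_mem_nhds hc)).and h).exists
    filter_upwards [hg₂.eventually (gt_mem_nhds hci), hfg] with a h₁ h₂ using h₂.2.trans_lt h₁

namespace FokkerPlanck

noncomputable def kernel (v x s : ℝ) : ℝ :=
  1 / s ^ ((3:ℝ)/2) * exp (-(3 * |x - s * v| ^ 2 / (4 * s ^ 3)))

noncomputable def gaussVar (v x s : ℝ) : ℝ := (s * v - x) / (s * √s)

noncomputable def gaussVarDeriv (v x s : ℝ) : ℝ := (3 * x - s * v) / (2 * s ^ 2 * √s)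

section
variable {v x s : ℝ}

lemma rpow_three_halves (hs : 0 ≤ s) : s ^ ((3:ℝ)/2) = s * √s := by
  rw [sqrt_eq_rpow, show (3:ℝ)/2 = 1 + 1/2 by norm_num, rpow_add' hs (by norm_num), rpow_one]

lemma kernel_nonneg (hs : 0 ≤ s) : 0 ≤ kernel v x s := by
  unfold kernel; positivity

lemma measurable_kernel : Measurable (kernel v x) := by
  unfold kernel; fun_prop

lemma continuousOn_kernel : ContinuousOn (kernel v x) (Ioi 0) := by
  intro s hs
  have h1 : s ^ ((3:ℝ)/2) ≠ 0 := (rpow_pos_of_pos hs _).ne'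
  have h2 : 4 * s ^ 3 ≠ 0 := by have : 0 < s := hs; positivity
  have h3 : s ≠ 0 ∨ 0 ≤ (3:ℝ)/2 := Or.inr (by norm_num)
  unfold kernel
  apply ContinuousAt.continuousWithinAt
  fun_prop (disch := assumption)

lemma intervalIntegrable_kernel {a b : ℝ} (ha : 0 < a) (hb : 0 < b) :
    IntervalIntegrable (kernel v x) volume a b :=
  (continuousOn_kernel.mono fun _ hs => (lt_min ha hb).trans_le hs.1).intervalIntegrable

lemma kernel_eq (hs : 0 < s) :
    kernel v x s = exp (-(3/4) * gaussVar v x s ^ 2) / (s * √s) := by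
  have hsq : 0 < √s := sqrt_pos.2 hs
  have h3 : s ^ 3 = (s * √s) ^ 2 := by rw [mul_pow, sq_sqrt hs.le]; ring
  rw [kernel, rpow_three_halves hs.le, gaussVar, sq_abs, h3, div_pow, one_div_mul_eq_div]
  congr 2
  ring

lemma hasDerivAt_gaussVar (hs : 0 < s) :
    HasDerivAt (gaussVar v x) (gaussVarDeriv v x s) s := by
  have hsq : 0 < √s := sqrt_pos.2 hs
  have h := (((hasDerivAt_id' s).mul_const v).sub_const x).div
    ((hasDerivAt_id' s).mul (hasDerivAt_sqrt hs.ne')) (mul_pos hs hsq).ne'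
  refine h.congr_deriv ?_
  simp only [gaussVarDeriv, Pi.mul_apply]
  field_simp
  rw [sq_sqrt hs.le]
  ring

lemma continuousOn_gaussVarDeriv : ContinuousOn (gaussVarDeriv v x) (Ioi 0) := by
  intro s hs
  have hs' : 0 < s := hs
  have : 2 * s ^ 2 * √s ≠ 0 := by have := sqrt_pos.2 hs'; positivity
  unfold gaussVarDeriv
  apply ContinuousAt.continuousWithinAt
  fun_prop (disch := assumption)

lemma continuousOn_exp_mul_gaussVarDeriv :
    ContinuousOn (fun s => exp (-(3/4) * gaussVar v x s ^ 2) * gaussVarDeriv v x s) (Ioi 0) := by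
  have hw : ContinuousOn (gaussVar v x) (Ioi 0) :=
    fun s hs => (hasDerivAt_gaussVar hs).continuousAt.continuousWithinAt
  exact (continuous_exp.comp_continuousOn (continuousOn_const.mul (hw.pow 2))).mul
    continuousOn_gaussVarDeriv

lemma integral_exp_mul_gaussVarDeriv {a b : ℝ} (ha : 0 < a) (hab : a ≤ b) :
    ∫ s in a..b, exp (-(3/4) * gaussVar v x s ^ 2) * gaussVarDeriv v x s
      = ∫ t in gaussVar v x a..gaussVar v x b, exp (-(3/4) * t ^ 2) := by
  have hpos : uIcc a b ⊆ Ioi 0 := by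
    rw [uIcc_of_le hab]; exact fun s hs => ha.trans_le hs.1
  exact intervalIntegral.integral_comp_mul_deriv (g := fun t => exp (-(3/4) * t ^ 2))
    (fun s hs => hasDerivAt_gaussVar (hpos hs)) (continuousOn_gaussVarDeriv.mono hpos)
    (by fun_prop)

lemma kernel_bounds_of_mem_window {η : ℝ} (hv : 0 < v) (hη0 : 0 ≤ η) (hη1 : η < 1)
    (hs : 0 < s) (h1 : (1 - η) * x ≤ s * v) (h2 : s * v ≤ (1 + η) * x) :
    2 * (1 - η) / (v * (2 + η)) * (exp (-(3/4) * gaussVar v x s ^ 2) * gaussVarDeriv v x s)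
        ≤ kernel v x s ∧
      kernel v x s ≤ 2 * (1 + η) / (v * (2 - η)) *
        (exp (-(3/4) * gaussVar v x s ^ 2) * gaussVarDeriv v x s) := by
  have hsq : 0 < √s := sqrt_pos.2 hs
  have hss : 0 ≤ s * √s := by positivity
  have hη2 : 0 < 2 - η := by linarith
  -- `1 / (s √s) = (2 / v) * (s v / (3x - s v)) * gaussVarDeriv`, and `s v / (3x - s v)` increases
  -- with `s v`.
  obtain ⟨hlo, hhi⟩ : 2 * (1 - η) / (v * (2 + η)) * gaussVarDeriv v x s ≤ 1 / (s * √s) ∧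
      1 / (s * √s) ≤ 2 * (1 + η) / (v * (2 - η)) * gaussVarDeriv v x s := by
    rw [gaussVarDeriv, div_mul_div_comm, div_mul_div_comm, div_le_div_iff₀ (by positivity)
      (by positivity), div_le_div_iff₀ (by positivity) (by positivity)]
    constructor
    · nlinarith [mul_nonneg hss (by nlinarith : 0 ≤ v * (2 + η) * s - (1 - η) * (3 * x - s * v))]
    · nlinarith [mul_nonneg hss (by nlinarith : 0 ≤ (1 + η) * (3 * x - s * v) - v * (2 - η) * s)]
  have hE := (exp_pos (-(3/4) * gaussVar v x s ^ 2)).le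
  rw [kernel_eq hs, div_eq_mul_one_div (exp _) (s * √s), mul_left_comm (2 * (1 - η) / _),
    mul_left_comm (2 * (1 + η) / _)]
  exact ⟨mul_le_mul_of_nonneg_left hlo hE, mul_le_mul_of_nonneg_left hhi hE⟩

lemma exp_neg_le_two_div_sq {y : ℝ} (hy : 0 < y) : exp (-y) ≤ 2 / y ^ 2 := by
  have h := pow_div_factorial_le_exp y hy.le 2
  rw [Nat.factorial_two, Nat.cast_ofNat] at h
  rw [exp_neg, ← inv_div]
  exact inv_anti₀ (by positivity) h

lemma kernel_le_of_mul_le_abs_sub {c : ℝ} (hs : 0 < s) (hc : 0 < c)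
    (h : c * s ≤ |x - s * v|) : kernel v x s ≤ 32 * √s / (9 * c ^ 4) := by
  have hsq : 0 < √s := sqrt_pos.2 hs
  have hexp : 3 * c ^ 2 / (4 * s) ≤ 3 * |x - s * v| ^ 2 / (4 * s ^ 3) := by
    rw [div_le_div_iff₀ (by positivity) (by positivity)]
    have := pow_le_pow_left₀ (by positivity) h 2
    nlinarith [mul_le_mul_of_nonneg_left this (by positivity : (0:ℝ) ≤ 12 * s)]
  calc kernel v x s ≤ 1 / (s * √s) * (2 / (3 * c ^ 2 / (4 * s)) ^ 2) := by
        rw [kernel, rpow_three_halves hs.le]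
        gcongr
        exact (exp_le_exp.2 (neg_le_neg hexp)).trans (exp_neg_le_two_div_sq (by positivity))
    _ = 32 * √s / (9 * c ^ 4) := by
        field_simp
        rw [sq_sqrt hs.le]
        ring

lemma mul_le_abs_sub_of_not_mem_window {η : ℝ} (hx : 0 ≤ x) (hη0 : 0 ≤ η) (hη1 : η ≤ 1)
    (h : s * v ≤ (1 - η) * x ∨ (1 + η) * x ≤ s * v) : η * v / 2 * s ≤ |x - s * v| := by
  rcases h with h | h
  · nlinarith [le_abs_self (x - s * v), mul_le_mul_of_nonneg_left h hη0, mul_nonneg hη0 hx,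
      mul_nonneg (sq_nonneg η) hx]
  · nlinarith [neg_abs_le (x - s * v), mul_nonneg (sub_nonneg.2 hη1) (by nlinarith : 0 ≤ s * v - x)]

section tail
variable {p q c : ℝ} (hp : 0 ≤ p) (hc : 0 < c) (h : ∀ s ∈ Ioc p q, c * s ≤ |x - s * v|)
include hp hc h

lemma norm_kernel_le_of_tail : ∀ s ∈ Ioc p q, ‖kernel v x s‖ ≤ 32 * √q / (9 * c ^ 4) := by
  intro s hs
  have hs0 : 0 < s := hp.trans_lt hs.1
  rw [norm_of_nonneg (kernel_nonneg hs0.le)]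
  calc kernel v x s ≤ 32 * √s / (9 * c ^ 4) := kernel_le_of_mul_le_abs_sub hs0 hc (h s hs)
    _ ≤ 32 * √q / (9 * c ^ 4) := by gcongr; exact hs.2

lemma intervalIntegrable_kernel_of_tail (hpq : p ≤ q) :
    IntervalIntegrable (kernel v x) volume p q := by
  refine (intervalIntegrable_const (c := 32 * √q / (9 * c ^ 4))).mono_fun
    measurable_kernel.aestronglyMeasurable ?_
  rw [uIoc_of_le hpq]
  filter_upwards [ae_restrict_mem measurableSet_Ioc] with s hs
  exact (norm_kernel_le_of_tail hp hc h s hs).trans (le_abs_self _)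

lemma integral_kernel_le_of_tail (hpq : p ≤ q) :
    ∫ s in p..q, kernel v x s ≤ (q - p) * (32 * √q / (9 * c ^ 4)) := by
  have := intervalIntegral.norm_integral_le_of_norm_le_const (a := p) (b := q) (f := kernel v x)
    (by rw [uIoc_of_le hpq]; exact norm_kernel_le_of_tail hp hc h)
  rw [abs_of_nonneg (sub_nonneg.2 hpq), mul_comm] at this
  exact (le_abs_self _).trans this

end tail

end

noncomputable def gaussWindow (v x η : ℝ) : ℝ :=
  ∫ t in gaussVar v x ((1 - η) * x / v)..gaussVar v x ((1 + η) * x / v), exp (-(3/4) * t ^ 2)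

section
variable {v x η : ℝ} (hv : 0 < v) (hx : 0 < x) (hη0 : 0 < η) (hη1 : η < 1)
include hv hx hη0 hη1

lemma integral_kernel_window_bounds :
    2 * (1 - η) / (v * (2 + η)) * gaussWindow v x η
        ≤ ∫ s in (1 - η) * x / v..(1 + η) * x / v, kernel v x s ∧
      ∫ s in (1 - η) * x / v..(1 + η) * x / v, kernel v x s
        ≤ 2 * (1 + η) / (v * (2 - η)) * gaussWindow v x η := by
  set a := (1 - η) * x / v
  set b := (1 + η) * x / v
  have ha : 0 < a := div_pos (mul_pos (by linarith) hx) hv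
  have hab : a ≤ b := div_le_div_of_nonneg_right (by nlinarith) hv.le
  have hpos : uIcc a b ⊆ Ioi 0 := by
    rw [uIcc_of_le hab]; exact fun s hs => ha.trans_le hs.1
  have hk := intervalIntegrable_kernel (v := v) (x := x) ha (ha.trans_le hab)
  have hg : IntervalIntegrable (fun s => exp (-(3/4) * gaussVar v x s ^ 2) * gaussVarDeriv v x s)
      volume a b := (continuousOn_exp_mul_gaussVarDeriv.mono hpos).intervalIntegrable
  have hbounds : ∀ s ∈ Icc a b, _ := fun s hs =>
    kernel_bounds_of_mem_window hv hη0.le hη1 (ha.trans_le hs.1)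
      ((div_le_iff₀ hv).1 hs.1) ((le_div_iff₀ hv).1 hs.2)
  rw [gaussWindow, ← integral_exp_mul_gaussVarDeriv ha hab, ← intervalIntegral.integral_const_mul,
    ← intervalIntegral.integral_const_mul]
  exact ⟨intervalIntegral.integral_mono_on hab (hg.const_mul _) hk fun s hs => (hbounds s hs).1,
    intervalIntegral.integral_mono_on hab hk (hg.const_mul _) fun s hs => (hbounds s hs).2⟩

lemma integral_kernel_bounds {ε : ℝ} (hbε : (1 + η) * x / v ≤ ε) :
    2 * (1 - η) / (v * (2 + η)) * gaussWindow v x η ≤ ∫ s in (0:ℝ)..ε, kernel v x s ∧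
      ∫ s in (0:ℝ)..ε, kernel v x s ≤ 2 * (1 + η) / (v * (2 - η)) * gaussWindow v x η +
        ε * (32 * √ε / (9 * (η * v / 2) ^ 4)) := by
  obtain ⟨hwin_lo, hwin_hi⟩ := integral_kernel_window_bounds hv hx hη0 hη1
  set a := (1 - η) * x / v
  set b := (1 + η) * x / v
  have ha : 0 < a := div_pos (mul_pos (by linarith) hx) hv
  have hab : a ≤ b := div_le_div_of_nonneg_right (by nlinarith) hv.le
  have hb : 0 < b := ha.trans_le hab
  have hc : 0 < η * v / 2 := by positivity
  have hlow : ∀ s ∈ Ioc 0 a, η * v / 2 * s ≤ |x - s * v| := fun s hs =>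
    mul_le_abs_sub_of_not_mem_window hx.le hη0.le hη1.le (Or.inl ((le_div_iff₀ hv).1 hs.2))
  have hhigh : ∀ s ∈ Ioc b ε, η * v / 2 * s ≤ |x - s * v| := fun s hs =>
    mul_le_abs_sub_of_not_mem_window hx.le hη0.le hη1.le (Or.inr ((div_le_iff₀ hv).1 hs.1.le))
  have h0a := intervalIntegrable_kernel_of_tail le_rfl hc hlow ha.le
  have hbε' := intervalIntegrable_kernel_of_tail hb.le hc hhigh hbε
  have hab' := intervalIntegrable_kernel (v := v) (x := x) ha hb
  rw [← intervalIntegral.integral_add_adjacent_intervals (h0a.trans hab') hbε',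
    ← intervalIntegral.integral_add_adjacent_intervals h0a hab']
  constructor
  · have h1 : 0 ≤ ∫ s in (0:ℝ)..a, kernel v x s :=
      intervalIntegral.integral_nonneg ha.le fun s hs => kernel_nonneg hs.1
    have h2 : 0 ≤ ∫ s in b..ε, kernel v x s :=
      intervalIntegral.integral_nonneg hbε fun s hs => kernel_nonneg (hb.le.trans hs.1)
    linarith
  · have h1 := integral_kernel_le_of_tail le_rfl hc hlow ha.le
    have h2 := integral_kernel_le_of_tail hb.le hc hhigh hbε
    have h3 : (a - 0) * (32 * √a / (9 * (η * v / 2) ^ 4))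
        ≤ a * (32 * √ε / (9 * (η * v / 2) ^ 4)) := by
      rw [sub_zero]; gcongr; exact hab.trans hbε
    have h4 : 0 ≤ 32 * √ε / (9 * (η * v / 2) ^ 4) := by positivity
    nlinarith

end

section limits
variable {α : Type*} {l : Filter α} {v : ℝ} {y : α → ℝ}

lemma gaussVar_mul_div {x c : ℝ} (hv : 0 < v) (hx : 0 < x) (hc : 0 < c) :
    gaussVar v x (c * x / v) = (c - 1) * v * √v / (c * √c) / √x := by
  have := sqrt_pos.2 hv
  have := sqrt_pos.2 hx
  have := sqrt_pos.2 hc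
  rw [gaussVar, sqrt_div' _ hv.le, sqrt_mul hc.le]
  field_simp

lemma tendsto_inv_sqrt (hy : Tendsto y l (𝓝[>] 0)) : Tendsto (fun a => (√(y a))⁻¹) l atTop :=
  (tendsto_sqrt_atTop.comp (tendsto_inv_nhdsGT_zero.comp hy)).congr fun a => sqrt_inv (y a)

lemma tendsto_gaussVar_mul_div_atTop (hy : Tendsto y l (𝓝[>] 0)) (hv : 0 < v) {c : ℝ}
    (hc : 1 < c) : Tendsto (fun a => gaussVar v (y a) (c * y a / v)) l atTop := by
  have hK : 0 < (c - 1) * v * √v / (c * √c) := by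
    have := sqrt_pos.2 hv; have := sqrt_pos.2 (zero_lt_one.trans hc)
    have : 0 < c - 1 := by linarith
    positivity
  refine ((tendsto_inv_sqrt hy).const_mul_atTop hK).congr' ?_
  filter_upwards [hy self_mem_nhdsWithin] with a ha
  rw [gaussVar_mul_div hv ha (zero_lt_one.trans hc), div_eq_mul_inv _ (√(y a))]

lemma tendsto_gaussVar_mul_div_atBot (hy : Tendsto y l (𝓝[>] 0)) (hv : 0 < v) {c : ℝ}
    (hc0 : 0 < c) (hc1 : c < 1) : Tendsto (fun a => gaussVar v (y a) (c * y a / v)) l atBot := by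
  have hK : (c - 1) * v * √v / (c * √c) < 0 := by
    have := sqrt_pos.2 hc0
    exact div_neg_of_neg_of_pos (mul_neg_of_neg_of_pos
      (mul_neg_of_neg_of_pos (by linarith) hv) (sqrt_pos.2 hv)) (by positivity)
  refine ((tendsto_inv_sqrt hy).const_mul_atTop_of_neg hK).congr' ?_
  filter_upwards [hy self_mem_nhdsWithin] with a ha
  rw [gaussVar_mul_div hv ha hc0, div_eq_mul_inv _ (√(y a))]

lemma tendsto_gaussWindow [l.IsCountablyGenerated] (hy : Tendsto y l (𝓝[>] 0)) (hv : 0 < v)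
    {η : ℝ} (hη0 : 0 < η) (hη1 : η < 1) :
    Tendsto (fun a => √3 / (2 * √π) * gaussWindow v (y a) η) l (𝓝 1) := by
  have hnorm : √3 / (2 * √π) * √(π / (3/4)) = 1 := by
    rw [sqrt_div' _ (by norm_num : (0:ℝ) ≤ 3/4), sqrt_div' _ (by norm_num : (0:ℝ) ≤ 4),
      show (4:ℝ) = 2 ^ 2 by norm_num, sqrt_sq zero_le_two]
    have := sqrt_pos.2 pi_pos
    have : 0 < √3 := by positivity
    field_simp
  rw [← hnorm, ← integral_gaussian]
  exact (intervalIntegral_tendsto_integral (integrable_exp_neg_mul_sq (by norm_num))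
    (tendsto_gaussVar_mul_div_atBot hy hv (by linarith) (by linarith))
    (tendsto_gaussVar_mul_div_atTop hy hv (by linarith))).const_mul _

lemma tendsto_window_ratios (hv : 0 < v) :
    Tendsto (fun η => 2 * (1 - η) / (v * (2 + η))) (𝓝[>] 0) (𝓝 (1 / v)) ∧
      Tendsto (fun η => 2 * (1 + η) / (v * (2 - η))) (𝓝[>] 0) (𝓝 (1 / v)) := by
  have hlo : ContinuousAt (fun η : ℝ => 2 * (1 - η) / (v * (2 + η))) 0 := by
    fun_prop (disch := simpa using hv.ne')
  have hhi : ContinuousAt (fun η : ℝ => 2 * (1 + η) / (v * (2 - η))) 0 := by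
    fun_prop (disch := simpa using hv.ne')
  constructor
  · convert hlo.tendsto.mono_left nhdsWithin_le_nhds using 2
    field_simp; norm_num
  · convert hhi.tendsto.mono_left nhdsWithin_le_nhds using 2
    field_simp; norm_num

section boundary
variable {x : ℝ → ℝ} (hx0 : Tendsto (fun ε => x ε / ε) (𝓝[>] 0) (𝓝 0))
include hx0

lemma tendsto_nhdsGT_of_tendsto_div (hxpos : ∀ ε > 0, 0 < x ε) :
    Tendsto x (𝓝[>] 0) (𝓝[>] 0) := by
  refine tendsto_nhdsWithin_of_tendsto_nhds_of_eventually_within _ ?_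
    (eventually_nhdsWithin_of_forall hxpos)
  simpa using (hx0.mul (tendsto_nhdsWithin_of_tendsto_nhds tendsto_id)).congr'
    (eventually_nhdsWithin_of_forall fun ε hε => div_mul_cancel₀ (x ε) (mem_Ioi.1 hε).ne')

lemma eventually_mul_div_le (hv : 0 < v) {c : ℝ} (hc : 0 < c) :
    ∀ᶠ ε in 𝓝[>] 0, c * x ε / v ≤ ε := by
  filter_upwards [hx0.eventually (gt_mem_nhds (div_pos hv hc)), self_mem_nhdsWithin] with ε h hε
  rw [div_lt_div_iff₀ hε hc] at h
  rw [div_le_iff₀ hv]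
  linarith

end boundary

end limits

end FokkerPlanck

open FokkerPlanck in
/-- The time-integrated Fokker–Planck kernel concentrates at `s = x/v` and
contributes the boundary flux factor `1/v`. -/
theorem stmt_3 (v : ℝ) (hv : 0 < v) (x : ℝ → ℝ)
    (hxpos : ∀ ε > 0, 0 < x ε)
    (hx0 : Tendsto (fun ε => x ε / ε) (nhdsWithin 0 (Set.Ioi 0)) (nhds 0)) :
    Tendsto (fun ε => Real.sqrt 3 / (2 * Real.sqrt π) *
        ∫ s in (0:ℝ)..ε, (1 / s ^ ((3:ℝ)/2)) *
          Real.exp (-(3 * |x ε - s * v| ^ 2 / (4 * s ^ 3))))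
      (nhdsWithin 0 (Set.Ioi 0)) (nhds (1 / v)) := by
  change Tendsto (fun ε => √3 / (2 * √π) * ∫ s in (0:ℝ)..ε, kernel v (x ε) s) _ _
  have hx := tendsto_nhdsGT_of_tendsto_div hx0 hxpos
  refine tendsto_of_squeeze_family (tendsto_window_ratios hv).1 (tendsto_window_ratios hv).2 ?_
  filter_upwards [Ioo_mem_nhdsGT one_pos] with η ⟨hη0, hη1⟩
  have hW := tendsto_gaussWindow hx hv hη0 hη1
  have htail : Tendsto (fun ε : ℝ => ε * (32 * √ε / (9 * (η * v / 2) ^ 4))) (𝓝[>] 0) (𝓝 0) := by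
    have h : Continuous fun ε : ℝ => ε * (32 * √ε / (9 * (η * v / 2) ^ 4)) := by fun_prop
    simpa using (h.tendsto 0).mono_left nhdsWithin_le_nhds
  refine ⟨_, _, by simpa using hW.const_mul (2 * (1 - η) / (v * (2 + η))),
    by simpa using
      (hW.const_mul (2 * (1 + η) / (v * (2 - η)))).add (htail.const_mul (√3 / (2 * √π))), ?_⟩
  filter_upwards [eventually_mul_div_le hx0 hv (by linarith : 0 < 1 + η), self_mem_nhdsWithin]
    with ε hbε hε
  obtain ⟨h₁, h₂⟩ := integral_kernel_bounds hv (hxpos ε hε) hη0 hη1 hbε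
  have hC : 0 ≤ √3 / (2 * √π) := by positivity
  exact ⟨by nlinarith [mul_le_mul_of_nonneg_left h₁ hC],
    by nlinarith [mul_le_mul_of_nonneg_left h₂ hC]⟩
end

section
/- Let $\mathcal{M}f = f_t + v f_x - f_{vv}$ and let $U_T^1 = (0,1) \times (-L,L) \times (0,T)$ with $L, T > 0$. If $f \in C^{1,2,1}_{x,v,t}(U_T^1) \cap C(\overline{U_T^1})$ satisfies $\mathcal{M}f \le 0$ on $U_T^1$, then $f$ attains its maximum over $\overline{U_T^1}$ on the set $\{t=0\} \cup \{x=0, v\ge 0\} \cup \{x=1, v\le 0\} \cup \{v = \pm L\}$. -/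
/-!
At a maximum point of `f - ε t` off the kinetic boundary one has `f_t ≥ ε`, `f_vv ≤ 0` and
`v f_x ≥ 0`, the last one also on the faces `x = 0, v < 0` and `x = 1, v > 0`, where the transport
field points into the domain; together they contradict `f_t + v f_x - f_vv ≤ 0`.
Since the derivatives of `f` exist only in the open box, this is applied to `f ∘ Φₐ - a t` with
`Φₐ (x, v, t) = (a + (1 - 2a) x, v, (1 - a) t)`, which maps the closed box into
`[a, 1 - a] × [-L, L] × [0, (1 - a) T]`. As `a → 0` these functions converge uniformly to `f`, and
maximum points on the compact kinetic boundary pass to the limit.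
-/

open Set Filter Topology

theorem IsLocalMaxOn.nonneg_of_hasDerivAt {h : ℝ → ℝ} {s : Set ℝ} {c d : ℝ}
    (hmax : IsLocalMaxOn h s c) (hs : s ∈ 𝓝[≤] c) (hd : HasDerivAt h d c) : 0 ≤ d := by
  refine ge_of_tendsto ((hasDerivAt_iff_tendsto_slope.mp hd).mono_left
    (nhdsLT_le_nhdsNE c)) ?_
  filter_upwards [(hmax.filter_mono ((nhdsWithin_mono c Iio_subset_Iic_self).trans
    (nhdsWithin_le_of_mem hs)) :), self_mem_nhdsWithin] with t hht (ht : t < c)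
  rw [slope_def_field]
  exact div_nonneg_of_nonpos (sub_nonpos.mpr hht) (sub_neg.mpr ht).le

theorem IsLocalMaxOn.nonpos_of_hasDerivAt {h : ℝ → ℝ} {s : Set ℝ} {c d : ℝ}
    (hmax : IsLocalMaxOn h s c) (hs : s ∈ 𝓝[≥] c) (hd : HasDerivAt h d c) : d ≤ 0 := by
  refine le_of_tendsto ((hasDerivAt_iff_tendsto_slope.mp hd).mono_left
    (nhdsGT_le_nhdsNE c)) ?_
  filter_upwards [(hmax.filter_mono ((nhdsWithin_mono c Ioi_subset_Ici_self).trans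
    (nhdsWithin_le_of_mem hs)) :), self_mem_nhdsWithin] with t hht (ht : c < t)
  rw [slope_def_field]
  exact div_nonpos_of_nonpos_of_nonneg (sub_nonpos.mpr hht) (sub_pos.mpr ht).le

/-- A positive second derivative would also make `c` a local minimum, so `h` would be locally
constant and `h'` locally zero. -/
theorem IsLocalMax.nonpos_of_hasDerivAt_deriv {h h' : ℝ → ℝ} {c d : ℝ} (hmax : IsLocalMax h c)
    (hh' : ∀ᶠ w in 𝓝 c, HasDerivAt h (h' w) w) (hd : HasDerivAt h' d c) : d ≤ 0 := by
  by_contra! hd_pos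
  have hderiv : deriv h =ᶠ[𝓝 c] h' := hh'.mono fun w hw => hw.deriv
  have hmin : IsLocalMin h c :=
    isLocalMin_of_deriv_deriv_pos (by rwa [hderiv.deriv_eq, hd.deriv])
      (by rw [hderiv.eq_of_nhds]; exact hmax.hasDerivAt_eq_zero hh'.self_of_nhds)
      hh'.self_of_nhds.continuousAt
  have hconst : ∀ᶠ w in 𝓝 c, h =ᶠ[𝓝 w] fun _ => h c :=
    (hmax.and hmin).eventually_nhds.mono fun w hw => hw.mono fun y hy => le_antisymm hy.1 hy.2
  have hzero : h' =ᶠ[𝓝 c] fun _ => 0 := (hconst.and hh').mono fun w ⟨hw, hdw⟩ =>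
    hdw.unique ((hasDerivAt_const w (h c)).congr_of_eventuallyEq hw)
  exact hd_pos.ne' (hd.unique ((hasDerivAt_const c 0).congr_of_eventuallyEq hzero))

theorem TendstoUniformlyOn.exists_isMaxOn_mem {ι X : Type*} [TopologicalSpace X] {l : Filter ι}
    [l.NeBot] {F : ι → X → ℝ} {f : X → ℝ} {K S : Set X} (hF : TendstoUniformlyOn F f l K)
    (hS : IsCompact S) (hSK : S ⊆ K) (hf : ContinuousOn f S)
    (hmax : ∀ᶠ i in l, ∃ γ ∈ S, IsMaxOn (F i) K γ) : ∃ γ ∈ S, IsMaxOn f K γ := by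
  obtain ⟨-, γ₀, hγ₀, -⟩ := hmax.exists
  obtain ⟨γ, hγS, hγmax⟩ := hS.exists_isMaxOn ⟨γ₀, hγ₀⟩ hf
  refine ⟨γ, hγS, isMaxOn_iff.mpr fun q hq => le_of_forall_pos_lt_add fun η hη => ?_⟩
  obtain ⟨i, hclose, γi, hγiS, hγimax⟩ :=
    ((Metric.tendstoUniformlyOn_iff.mp hF (η / 2) (half_pos hη)).and hmax).exists
  have hq_close := hclose q hq
  have hγi_close := hclose γi (hSK hγiS)
  rw [Real.dist_eq, abs_lt] at hq_close hγi_close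
  have : F i q ≤ F i γi := hγimax hq
  have : f γi ≤ f γ := hγmax hγiS
  linarith

def kineticBox (L T : ℝ) : Set (ℝ × ℝ × ℝ) := Icc 0 1 ×ˢ Icc (-L) L ×ˢ Icc 0 T

def kineticBoundary (L : ℝ) : Set (ℝ × ℝ × ℝ) :=
  {q | q.2.2 = 0 ∨ (q.1 = 0 ∧ 0 ≤ q.2.1) ∨ (q.1 = 1 ∧ q.2.1 ≤ 0) ∨ q.2.1 = L ∨ q.2.1 = -L}

def kineticOpenBox (L T : ℝ) : Set (ℝ × ℝ × ℝ) := Ioo 0 1 ×ˢ Ioo (-L) L ×ˢ Ioo 0 T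

theorem isCompact_kineticBox (L T : ℝ) : IsCompact (kineticBox L T) :=
  isCompact_Icc.prod (isCompact_Icc.prod isCompact_Icc)

theorem isClosed_kineticBoundary (L : ℝ) : IsClosed (kineticBoundary L) := by
  simp only [kineticBoundary, ofPred_or, ofPred_and]
  apply_rules [IsClosed.union, IsClosed.inter, isClosed_eq, isClosed_le, continuous_const,
    continuous_fst, continuous_snd, Continuous.comp]

theorem optimality_conditions_of_isMaxOn_kineticBox {G : ℝ × ℝ × ℝ → ℝ}
    {L T x v t Gt Gx Gvv : ℝ} {Gv : ℝ → ℝ} (hmax : IsMaxOn G (kineticBox L T) (x, v, t))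
    (hK : (x, v, t) ∈ kineticBox L T) (hΓ : (x, v, t) ∉ kineticBoundary L)
    (ht : HasDerivAt (fun s => G (x, v, s)) Gt t) (hx : HasDerivAt (fun y => G (y, v, t)) Gx x)
    (hv : ∀ᶠ w in 𝓝 v, HasDerivAt (fun w => G (x, w, t)) (Gv w) w)
    (hvv : HasDerivAt Gv Gvv v) :
    0 ≤ Gt ∧ 0 ≤ v * Gx ∧ Gvv ≤ 0 := by
  obtain ⟨hx01, hvL, ht0T⟩ := hK
  simp only [kineticBoundary, mem_ofPred_eq, not_or, not_and, not_le] at hΓ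
  obtain ⟨ht0, hx0, hx1, hvL', hvL''⟩ := hΓ
  have hmax_t : IsMaxOn (fun s => G (x, v, s)) (Icc 0 T) t :=
    hmax.comp_mapsTo (fun s hs => ⟨hx01, hvL, hs⟩) rfl
  have hmax_x : IsMaxOn (fun y => G (y, v, t)) (Icc 0 1) x :=
    hmax.comp_mapsTo (fun y hy => ⟨hy, hvL, ht0T⟩) rfl
  have hmax_v : IsMaxOn (fun w => G (x, w, t)) (Icc (-L) L) v :=
    hmax.comp_mapsTo (fun w hw => ⟨hx01, hw, ht0T⟩) rfl
  refine ⟨?_, ?_, ?_⟩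
  · exact hmax_t.localize.nonneg_of_hasDerivAt
      (Icc_mem_nhdsLE_of_mem ⟨ht0T.1.lt_of_ne' ht0, ht0T.2⟩) ht
  · rcases lt_trichotomy v 0 with hv0 | rfl | hv0
    · have hx1' : x < 1 := hx01.2.lt_of_ne fun h => (hx1 h).not_gt hv0
      exact mul_nonneg_of_nonpos_of_nonpos hv0.le
        (hmax_x.localize.nonpos_of_hasDerivAt (Icc_mem_nhdsGE_of_mem ⟨hx01.1, hx1'⟩) hx)
    · rw [zero_mul]
    · have hx0' : 0 < x := hx01.1.lt_of_ne' fun h => (hx0 h).not_gt hv0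
      exact mul_nonneg hv0.le
        (hmax_x.localize.nonneg_of_hasDerivAt (Icc_mem_nhdsLE_of_mem ⟨hx0', hx01.2⟩) hx)
  · exact (hmax_v.isLocalMax (Icc_mem_nhds (hvL.1.lt_of_ne' hvL'') (hvL.2.lt_of_ne hvL'))
      ).nonpos_of_hasDerivAt_deriv hv hvv

def kineticShrink (a : ℝ) (q : ℝ × ℝ × ℝ) : ℝ × ℝ × ℝ :=
  (a + (1 - 2 * a) * q.1, q.2.1, (1 - a) * q.2.2)

theorem continuous_kineticShrink :
    Continuous fun aq : ℝ × (ℝ × ℝ × ℝ) => kineticShrink aq.1 aq.2 := by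
  unfold kineticShrink; fun_prop

theorem mapsTo_kineticShrink {L T a : ℝ} (ha0 : 0 ≤ a) (ha1 : a ≤ 1 / 2) :
    MapsTo (kineticShrink a) (kineticBox L T) (kineticBox L T) := by
  rintro ⟨x, v, t⟩ ⟨⟨hx0, hx1⟩, hv, ht0, htT⟩
  simp only [kineticShrink, kineticBox, mem_prod, mem_Icc]
  refine ⟨⟨?_, ?_⟩, hv, ?_, ?_⟩ <;> nlinarith

theorem kineticShrink_mem_kineticOpenBox {L T a : ℝ} {q : ℝ × ℝ × ℝ} (ha0 : 0 < a)
    (ha1 : a < 1 / 2) (hK : q ∈ kineticBox L T) (hΓ : q ∉ kineticBoundary L) :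
    kineticShrink a q ∈ kineticOpenBox L T := by
  obtain ⟨x, v, t⟩ := q
  obtain ⟨⟨hx0, hx1⟩, ⟨hvL, hvL'⟩, ht0, htT⟩ := hK
  simp only [kineticBoundary, mem_ofPred_eq, not_or] at hΓ
  obtain ⟨ht0', -, -, hvL'', hvL'''⟩ := hΓ
  have ht : 0 < t := ht0.lt_of_ne' ht0'
  simp only [kineticShrink, kineticOpenBox, mem_prod, mem_Ioo]
  refine ⟨⟨?_, ?_⟩, ⟨hvL.lt_of_ne' hvL''', hvL'.lt_of_ne hvL''⟩, ?_, ?_⟩ <;> nlinarith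

theorem exists_isMaxOn_shrink_mem_kineticBoundary {L T : ℝ} (hL : 0 ≤ L) (hT : 0 ≤ T)
    {f ft fx fv fvv : ℝ × ℝ × ℝ → ℝ} (hcont : ContinuousOn f (kineticBox L T))
    (hft : ∀ p ∈ kineticOpenBox L T, HasDerivAt (fun t => f (p.1, p.2.1, t)) (ft p) p.2.2)
    (hfx : ∀ p ∈ kineticOpenBox L T, HasDerivAt (fun x => f (x, p.2.1, p.2.2)) (fx p) p.1)
    (hfv : ∀ p ∈ kineticOpenBox L T, HasDerivAt (fun v => f (p.1, v, p.2.2)) (fv p) p.2.1)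
    (hfvv : ∀ p ∈ kineticOpenBox L T, HasDerivAt (fun v => fv (p.1, v, p.2.2)) (fvv p) p.2.1)
    (hsub : ∀ p ∈ kineticOpenBox L T, ft p + p.2.1 * fx p - fvv p ≤ 0)
    {a : ℝ} (ha0 : 0 < a) (ha1 : a < 1 / 2) :
    ∃ γ ∈ kineticBox L T ∩ kineticBoundary L,
      IsMaxOn (fun q => f (kineticShrink a q) - a * q.2.2) (kineticBox L T) γ := by
  have hne : (kineticBox L T).Nonempty :=
    ⟨(0, 0, 0), ⟨le_rfl, zero_le_one⟩, ⟨neg_nonpos.mpr hL, hL⟩, le_rfl, hT⟩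
  have hcont' : ContinuousOn (fun q => f (kineticShrink a q) - a * q.2.2) (kineticBox L T) :=
    (hcont.comp (continuous_kineticShrink.comp (Continuous.prodMk_right a)).continuousOn
      (mapsTo_kineticShrink ha0.le ha1.le)).sub (by fun_prop)
  obtain ⟨γ, hγK, hmax⟩ := (isCompact_kineticBox L T).exists_isMaxOn hne hcont'
  refine ⟨γ, ⟨hγK, ?_⟩, hmax⟩
  by_contra hγΓ
  obtain ⟨x, v, t⟩ := γ
  set p := kineticShrink a (x, v, t)
  have hp := kineticShrink_mem_kineticOpenBox ha0 ha1 hγK hγΓ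
  have hv_nhds : ∀ᶠ w in 𝓝 v, kineticShrink a (x, w, t) ∈ kineticOpenBox L T := by
    filter_upwards [isOpen_Ioo.mem_nhds hp.2.1] with w hw using ⟨hp.1, hw, hp.2.2⟩
  have hGt :
      HasDerivAt (fun s => f (kineticShrink a (x, v, s)) - a * s) (ft p * (1 - a) - a) t :=
    ((hft p hp).comp t ((hasDerivAt_id t).const_mul (1 - a))).sub
      ((hasDerivAt_id t).const_mul a) |>.congr_deriv (by ring)
  have hGx :
      HasDerivAt (fun y => f (kineticShrink a (y, v, t)) - a * t) (fx p * (1 - 2 * a)) x :=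
    ((hfx p hp).comp x (((hasDerivAt_id x).const_mul (1 - 2 * a)).const_add a)).sub_const _
      |>.congr_deriv (by ring)
  have hGv : ∀ᶠ w in 𝓝 v, HasDerivAt (fun w => f (kineticShrink a (x, w, t)) - a * t)
      (fv (kineticShrink a (x, w, t))) w :=
    hv_nhds.mono fun w hw => (hfv _ hw).sub_const _
  obtain ⟨hGt, hGx, hGvv⟩ :=
    optimality_conditions_of_isMaxOn_kineticBox hmax hγK hγΓ hGt hGx hGv (hfvv p hp)
  have hft_pos : 0 < ft p := by nlinarith
  have hvfx : 0 ≤ v * fx p := by nlinarith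
  have hsub_p : ft p + v * fx p - fvv p ≤ 0 := hsub p hp
  linarith

theorem tendstoUniformlyOn_comp_kineticShrink {L T : ℝ} {f : ℝ × ℝ × ℝ → ℝ}
    (hcont : ContinuousOn f (kineticBox L T)) :
    TendstoUniformlyOn (fun a q => f (kineticShrink a q) - a * q.2.2) f (𝓝[>] 0)
      (kineticBox L T) := by
  set F := fun (a : ℝ) (q : ℝ × ℝ × ℝ) => f (kineticShrink a q) - a * q.2.2
  have hF : ContinuousOn ↿F (Icc 0 (1 / 2) ×ˢ kineticBox L T) :=
    (hcont.comp continuous_kineticShrink.continuousOn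
      fun aq haq => mapsTo_kineticShrink haq.1.1 haq.1.2 haq.2).sub (by fun_prop)
  have hF0 : F 0 = f := funext fun q => by simp [F, kineticShrink]
  have hlim := ((isCompact_Icc.prod (isCompact_kineticBox L T)).uniformContinuousOn_of_continuous
    hF).tendstoUniformlyOn (x := 0) ⟨le_rfl, one_half_pos.le⟩
  rw [hF0] at hlim
  exact fun u hu => nhdsWithin_le_of_mem (Icc_mem_nhdsGT one_half_pos) (hlim u hu)

/-- Maximum principle for the kinetic Fokker–Planck operator
`𝓜 f = f_t + v f_x - f_vv` on the bounded domain `(0,1) × (-L,L) × (0,T)`: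
a subsolution attains its maximum on
`{t=0} ∪ {x=0, v ≥ 0} ∪ {x=1, v ≤ 0} ∪ {v = ± L}`. -/
theorem stmt_5 (L T : ℝ) (hL : 0 < L) (hT : 0 < T)
    (f ft fx fv fvv : ℝ × ℝ × ℝ → ℝ)
    (hcont : ContinuousOn f (Set.Icc 0 1 ×ˢ Set.Icc (-L) L ×ˢ Set.Icc 0 T))
    (hft : ∀ p ∈ Set.Ioo (0:ℝ) 1 ×ˢ Set.Ioo (-L) L ×ˢ Set.Ioo 0 T,
      HasDerivAt (fun t => f (p.1, p.2.1, t)) (ft p) p.2.2)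
    (hfx : ∀ p ∈ Set.Ioo (0:ℝ) 1 ×ˢ Set.Ioo (-L) L ×ˢ Set.Ioo 0 T,
      HasDerivAt (fun x => f (x, p.2.1, p.2.2)) (fx p) p.1)
    (hfv : ∀ p ∈ Set.Ioo (0:ℝ) 1 ×ˢ Set.Ioo (-L) L ×ˢ Set.Ioo 0 T,
      HasDerivAt (fun v => f (p.1, v, p.2.2)) (fv p) p.2.1)
    (hfvv : ∀ p ∈ Set.Ioo (0:ℝ) 1 ×ˢ Set.Ioo (-L) L ×ˢ Set.Ioo 0 T,
      HasDerivAt (fun v => fv (p.1, v, p.2.2)) (fvv p) p.2.1)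
    (hsub : ∀ p ∈ Set.Ioo (0:ℝ) 1 ×ˢ Set.Ioo (-L) L ×ˢ Set.Ioo 0 T,
      ft p + p.2.1 * fx p - fvv p ≤ 0) :
    ∃ p ∈ (Set.Icc 0 1 ×ˢ Set.Icc (-L) L ×ˢ Set.Icc 0 T) ∩
        {q : ℝ × ℝ × ℝ | q.2.2 = 0 ∨ (q.1 = 0 ∧ 0 ≤ q.2.1) ∨ (q.1 = 1 ∧ q.2.1 ≤ 0) ∨
          q.2.1 = L ∨ q.2.1 = -L},
      IsMaxOn f (Set.Icc 0 1 ×ˢ Set.Icc (-L) L ×ˢ Set.Icc 0 T) p :=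
  (tendstoUniformlyOn_comp_kineticShrink hcont).exists_isMaxOn_mem
    ((isCompact_kineticBox L T).inter_right (isClosed_kineticBoundary L)) inter_subset_left
    (hcont.mono inter_subset_left) <| by
      filter_upwards [Ioo_mem_nhdsGT one_half_pos] with a ha using
        exists_isMaxOn_shrink_mem_kineticBoundary hL.le hT.le hcont hft hfx hfv hfvv hsub ha.1 ha.2
end

section
/- Suppose $f \in C^{1,2,1}_{x,v,t}(U_T) \cap C(\overline{U_T})$, with $U_T = (0,1)\times\mathbb{R}\times(0,T)$, satisfies $f_t + v f_x - f_{vv} \le 0$, is bounded, and for each $w \in \mathbb{R}$ and $\lambda > 0$ one has the bounded-domain maximum principle available for $g = f - \lambda(1 + |v-w|^2)e^{2t}$. Then $\sup_{U_T} f \le \sup_{\Gamma_T^-} f$, where $\Gamma_T^- = (\Omega \times \{t=0\}) \cup (\{x=0\}\times(0,\infty)\times(0,T)) \cup (\{x=1\}\times(-\infty,0)\times(0,T))$. -/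
open Set Real

/-!
Fix `p = (x, v, t)` and `ε > 0`, and apply the bounded-domain maximum principle to
`g = f - λ (1 + |v' - v|²) e^{2t'}` on the box `|v' - v| ≤ r` with `λ = ε e^{-2T}`. Since `f` is
bounded, for `r` large the barrier makes `g ≤ sup_{Γ_T⁻} f` on the velocity cuts `v' = v ± r`; on
the rest of the box's kinetic boundary `g ≤ f`, and those points lie in the closure of `Γ_T⁻`, so
continuity of `f` gives the same bound. At `p` itself the barrier is only `λ e^{2t} ≤ ε`.
-/

theorem le_csSup_image_of_mem_closure {α β : Type*} [TopologicalSpace α]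
    [ConditionallyCompleteLattice β] [TopologicalSpace β] [ClosedIicTopology β]
    {f : α → β} {s : Set α} {a : α} (hf : ContinuousOn f (closure s))
    (hs : BddAbove (f '' s)) (ha : a ∈ closure s) : f a ≤ sSup (f '' s) :=
  closure_minimal (fun _ hy => le_csSup hs hy) isClosed_Iic (hf.image_closure ⟨a, ha, rfl⟩)

def closedSlab (T : ℝ) : Set (ℝ × ℝ × ℝ) := Icc 0 1 ×ˢ univ ×ˢ Icc 0 T

def incomingBoundary (T : ℝ) : Set (ℝ × ℝ × ℝ) :=
  (Icc 0 1 ×ˢ univ ×ˢ {0}) ∪ ({0} ×ˢ Ioi 0 ×ˢ Ioo 0 T) ∪ ({1} ×ˢ Iio 0 ×ˢ Ioo 0 T)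

def truncatedKineticBoundary (T w r : ℝ) : Set (ℝ × ℝ × ℝ) :=
  (Icc 0 1 ×ˢ Icc (w - r) (w + r) ×ˢ Icc 0 T) ∩
    {q | q.2.2 = 0 ∨ (q.1 = 0 ∧ 0 ≤ q.2.1) ∨ (q.1 = 1 ∧ q.2.1 ≤ 0) ∨ q.2.1 = w - r ∨ q.2.1 = w + r}

noncomputable def barrier (lam w : ℝ) (q : ℝ × ℝ × ℝ) : ℝ :=
  lam * (1 + |q.2.1 - w| ^ 2) * exp (2 * q.2.2)

theorem isClosed_closedSlab (T : ℝ) : IsClosed (closedSlab T) :=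
  isClosed_Icc.prod (isClosed_univ.prod isClosed_Icc)

theorem incomingBoundary_subset_closedSlab {T : ℝ} (hT : 0 ≤ T) :
    incomingBoundary T ⊆ closedSlab T := by
  rintro ⟨x, v, t⟩ ((⟨hx, -, rfl⟩ | ⟨rfl, -, ht⟩) | ⟨rfl, -, ht⟩)
  · exact ⟨hx, trivial, le_rfl, hT⟩
  · exact ⟨⟨le_rfl, zero_le_one⟩, trivial, Ioo_subset_Icc_self ht⟩
  · exact ⟨⟨zero_le_one, le_rfl⟩, trivial, Ioo_subset_Icc_self ht⟩

theorem closure_incomingBoundary {T : ℝ} (hT : 0 < T) :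
    closure (incomingBoundary T) =
      (Icc 0 1 ×ˢ univ ×ˢ {0}) ∪ ({0} ×ˢ Ici 0 ×ˢ Icc 0 T) ∪ ({1} ×ˢ Iic 0 ×ˢ Icc 0 T) := by
  simp only [incomingBoundary, closure_union, closure_prod_eq, closure_Icc, closure_univ,
    closure_singleton, closure_Ioi, closure_Iio, closure_Ioo hT.ne]

theorem le_sSup_incomingBoundary {T : ℝ} (hT : 0 < T) {f : ℝ × ℝ × ℝ → ℝ}
    (hf : ContinuousOn f (closedSlab T)) (hbdd : BddAbove (f '' incomingBoundary T))
    {q : ℝ × ℝ × ℝ} (hq : q ∈ closedSlab T)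
    (hbd : q.2.2 = 0 ∨ (q.1 = 0 ∧ 0 ≤ q.2.1) ∨ (q.1 = 1 ∧ q.2.1 ≤ 0)) :
    f q ≤ sSup (f '' incomingBoundary T) := by
  refine le_csSup_image_of_mem_closure (hf.mono ?_) hbdd ?_
  · exact closure_minimal (incomingBoundary_subset_closedSlab hT.le) (isClosed_closedSlab T)
  obtain ⟨x, v, t⟩ := q
  obtain ⟨hx, -, ht⟩ := hq
  rw [closure_incomingBoundary hT]
  rcases hbd with rfl | ⟨rfl, hv⟩ | ⟨rfl, hv⟩
  · exact Or.inl (Or.inl ⟨hx, trivial, rfl⟩)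
  · exact Or.inl (Or.inr ⟨rfl, hv, ht⟩)
  · exact Or.inr ⟨rfl, hv, ht⟩

theorem barrier_nonneg {lam : ℝ} (hlam : 0 ≤ lam) (w : ℝ) (q : ℝ × ℝ × ℝ) :
    0 ≤ barrier lam w q := by
  unfold barrier; positivity

theorem mul_one_add_sq_le_barrier {lam r w : ℝ} (hlam : 0 ≤ lam) {q : ℝ × ℝ × ℝ}
    (hq : |q.2.1 - w| = r) (ht : 0 ≤ q.2.2) : lam * (1 + r ^ 2) ≤ barrier lam w q := by
  rw [barrier, hq]
  exact le_mul_of_one_le_right (by positivity) (one_le_exp (by linarith))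

theorem exists_pos_le_mul_one_add_sq {lam : ℝ} (hlam : 0 < lam) (c : ℝ) :
    ∃ r > 0, c ≤ lam * (1 + r ^ 2) := by
  refine ⟨max 1 (c / lam), by positivity, ?_⟩
  set r := max 1 (c / lam)
  calc c ≤ lam * r := (div_le_iff₀' hlam).1 (le_max_right _ _)
    _ ≤ lam * r ^ 2 := by gcongr; exact le_self_pow₀ (le_max_left _ _) two_ne_zero
    _ ≤ lam * (1 + r ^ 2) := by gcongr; linarith

theorem sSup_sub_barrier_le {T : ℝ} (hT : 0 < T) {f : ℝ × ℝ × ℝ → ℝ}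
    (hf : ContinuousOn f (closedSlab T)) {B : ℝ} (hB : ∀ q, f q ≤ B)
    (hbdd : BddAbove (f '' incomingBoundary T)) {lam r : ℝ} (w : ℝ) (hlam : 0 ≤ lam)
    (hr : 0 ≤ r) (hBr : B ≤ sSup (f '' incomingBoundary T) + lam * (1 + r ^ 2)) :
    sSup ((fun q => f q - barrier lam w q) '' truncatedKineticBoundary T w r) ≤
      sSup (f '' incomingBoundary T) := by
  refine csSup_le ⟨_, (0, w, 0), ⟨⟨⟨le_rfl, zero_le_one⟩, ⟨by linarith, by linarith⟩,
    ⟨le_rfl, hT.le⟩⟩, Or.inl rfl⟩, rfl⟩ ?_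
  rintro _ ⟨q, ⟨⟨hx, hv, ht⟩, hq⟩, rfl⟩
  have hslab : q ∈ closedSlab T := ⟨hx, trivial, ht⟩
  rcases hq with hq | hq | hq | hq | hq
  iterate 3
    linarith [le_sSup_incomingBoundary hT hf hbdd hslab (by tauto), barrier_nonneg hlam w q]
  all_goals
    have hv : |q.2.1 - w| = r := by rw [hq]; simp [abs_of_nonneg hr]
    linarith [hB q, mul_one_add_sq_le_barrier hlam hv ht.1]


theorem stmt_8_general (T : ℝ) (hT : 0 < T)
    (f : ℝ × ℝ × ℝ → ℝ)
    (hcont : ContinuousOn f (Set.Icc 0 1 ×ˢ (Set.univ : Set ℝ) ×ˢ Set.Icc 0 T))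
    (hbdd : ∃ B : ℝ, ∀ p : ℝ × ℝ × ℝ, |f p| ≤ B)
    -- bounded-domain maximum principle for `g = f - λ (1 + |v-w|²) e^{2t}`
    (hMP : ∀ w lam r : ℝ, 0 < lam → 0 < r →
      ∀ p ∈ Set.Icc (0:ℝ) 1 ×ˢ Set.Icc (w - r) (w + r) ×ˢ Set.Icc 0 T,
        (fun q : ℝ × ℝ × ℝ => f q - lam * (1 + |q.2.1 - w| ^ 2) * Real.exp (2 * q.2.2)) p ≤
          sSup ((fun q : ℝ × ℝ × ℝ =>
              f q - lam * (1 + |q.2.1 - w| ^ 2) * Real.exp (2 * q.2.2)) ''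
            ((Set.Icc (0:ℝ) 1 ×ˢ Set.Icc (w - r) (w + r) ×ˢ Set.Icc 0 T) ∩
              {q : ℝ × ℝ × ℝ | q.2.2 = 0 ∨ (q.1 = 0 ∧ 0 ≤ q.2.1) ∨ (q.1 = 1 ∧ q.2.1 ≤ 0) ∨
                q.2.1 = w - r ∨ q.2.1 = w + r}))) :
    ∀ p ∈ Set.Icc (0:ℝ) 1 ×ˢ (Set.univ : Set ℝ) ×ˢ Set.Icc 0 T,
      f p ≤ sSup (f '' ((Set.Icc (0:ℝ) 1 ×ˢ (Set.univ : Set ℝ) ×ˢ {(0:ℝ)}) ∪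
        ({(0:ℝ)} ×ˢ Set.Ioi (0:ℝ) ×ˢ Set.Ioo 0 T) ∪
        ({(1:ℝ)} ×ˢ Set.Iio (0:ℝ) ×ˢ Set.Ioo 0 T))) := by
  obtain ⟨B, hB⟩ := hbdd
  have hfB : ∀ q, f q ≤ B := fun q => (abs_le.1 (hB q)).2
  have hΓ : BddAbove (f '' incomingBoundary T) := ⟨B, forall_mem_image.2 fun q _ => hfB q⟩
  rintro ⟨x, v, t⟩ ⟨hx, -, ht⟩
  change f (x, v, t) ≤ sSup (f '' incomingBoundary T)
  refine le_of_forall_pos_le_add fun ε hε => ?_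
  set lam := ε * exp (-(2 * T))
  have hlam : 0 < lam := by positivity
  obtain ⟨r, hr, hBr⟩ := exists_pos_le_mul_one_add_sq hlam (B - sSup (f '' incomingBoundary T))
  have hp := (hMP v lam r hlam hr (x, v, t) ⟨hx, ⟨by linarith, by linarith⟩, ht⟩).trans
    (sSup_sub_barrier_le hT hcont hfB hΓ v hlam.le hr.le (by linarith))
  have hsmall : lam * exp (2 * t) ≤ ε := calc
    lam * exp (2 * t) ≤ lam * exp (2 * T) := by gcongr; exact ht.2
    _ = ε := by rw [mul_assoc, ← exp_add]; simp
  simp only [sub_self, abs_zero] at hp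
  linarith

/-- Maximum principle on the velocity-unbounded slab via barrier functions:
if `f` is a bounded subsolution of `𝓜 f = f_t + v f_x - f_vv ≤ 0` on
`U_T = (0,1) × ℝ × (0,T)` and the bounded-domain maximum principle is available
for `g = f - λ (1 + |v-w|²) e^{2t}`, then `sup_{U_T} f ≤ sup_{Γ_T⁻} f`. -/
theorem stmt_8 (T : ℝ) (hT : 0 < T)
    (f ft fx fv fvv : ℝ × ℝ × ℝ → ℝ)
    (hcont : ContinuousOn f (Set.Icc 0 1 ×ˢ (Set.univ : Set ℝ) ×ˢ Set.Icc 0 T))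
    (hbdd : ∃ B : ℝ, ∀ p : ℝ × ℝ × ℝ, |f p| ≤ B)
    (hft : ∀ p ∈ Set.Ioo (0:ℝ) 1 ×ˢ (Set.univ : Set ℝ) ×ˢ Set.Ioo 0 T,
      HasDerivAt (fun t => f (p.1, p.2.1, t)) (ft p) p.2.2)
    (hfx : ∀ p ∈ Set.Ioo (0:ℝ) 1 ×ˢ (Set.univ : Set ℝ) ×ˢ Set.Ioo 0 T,
      HasDerivAt (fun x => f (x, p.2.1, p.2.2)) (fx p) p.1)
    (hfv : ∀ p ∈ Set.Ioo (0:ℝ) 1 ×ˢ (Set.univ : Set ℝ) ×ˢ Set.Ioo 0 T,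
      HasDerivAt (fun v => f (p.1, v, p.2.2)) (fv p) p.2.1)
    (hfvv : ∀ p ∈ Set.Ioo (0:ℝ) 1 ×ˢ (Set.univ : Set ℝ) ×ˢ Set.Ioo 0 T,
      HasDerivAt (fun v => fv (p.1, v, p.2.2)) (fvv p) p.2.1)
    (hsub : ∀ p ∈ Set.Ioo (0:ℝ) 1 ×ˢ (Set.univ : Set ℝ) ×ˢ Set.Ioo 0 T,
      ft p + p.2.1 * fx p - fvv p ≤ 0)
    -- bounded-domain maximum principle for `g = f - λ (1 + |v-w|²) e^{2t}`
    (hMP : ∀ w lam r : ℝ, 0 < lam → 0 < r →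
      ∀ p ∈ Set.Icc (0:ℝ) 1 ×ˢ Set.Icc (w - r) (w + r) ×ˢ Set.Icc 0 T,
        (fun q : ℝ × ℝ × ℝ => f q - lam * (1 + |q.2.1 - w| ^ 2) * Real.exp (2 * q.2.2)) p ≤
          sSup ((fun q : ℝ × ℝ × ℝ =>
              f q - lam * (1 + |q.2.1 - w| ^ 2) * Real.exp (2 * q.2.2)) ''
            ((Set.Icc (0:ℝ) 1 ×ˢ Set.Icc (w - r) (w + r) ×ˢ Set.Icc 0 T) ∩
              {q : ℝ × ℝ × ℝ | q.2.2 = 0 ∨ (q.1 = 0 ∧ 0 ≤ q.2.1) ∨ (q.1 = 1 ∧ q.2.1 ≤ 0) ∨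
                q.2.1 = w - r ∨ q.2.1 = w + r}))) :
    ∀ p ∈ Set.Icc (0:ℝ) 1 ×ˢ (Set.univ : Set ℝ) ×ˢ Set.Icc 0 T,
      f p ≤ sSup (f '' ((Set.Icc (0:ℝ) 1 ×ˢ (Set.univ : Set ℝ) ×ˢ {(0:ℝ)}) ∪
        ({(0:ℝ)} ×ˢ Set.Ioi (0:ℝ) ×ˢ Set.Ioo 0 T) ∪
        ({(1:ℝ)} ×ˢ Set.Iio (0:ℝ) ×ˢ Set.Ioo 0 T))) :=
  stmt_8_general T hT f hcont hbdd hMP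
end

section
/- Let $\alpha \in \mathbb{R}$ and suppose $F(x,v) = x^{\alpha}\,\Phi\left(-\frac{v^3}{9x}\right)$ for $x>0$, where $\Phi$ is a $C^2$ function. Then $F$ satisfies the steady Fokker–Planck equation $v F_x = F_{vv}$ on $\{x > 0\}$ if and only if $\Phi = \Phi(z)$ satisfies Kummer's equation $z\Phi_{zz} + (\tfrac{2}{3} - z)\Phi_z + \alpha\,\Phi = 0$ at $z = -\frac{v^3}{9x}$. -/
/-! With `z = -v³ / (9x)`, the chain rule gives, for `x > 0`,
`v ∂ₓF - ∂ᵥᵥF = v x^(α-1) K[Φ](z)`, where `K` is Kummer's operator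
`z Φ'' + (b - z) Φ' - a Φ` with `a = -α`, `b = 2/3`. Hence Kummer's equation implies the
PDE. Conversely every `z ≠ 0` is attained at `(x, v) = (z² / 9, -z)`, where `v x^(α-1) ≠ 0`,
and `z = 0` follows by continuity of `K[Φ]`. -/

open Topology

noncomputable def kummerOperator (a b : ℝ) (Φ : ℝ → ℝ) (z : ℝ) : ℝ :=
  z * deriv (deriv Φ) z + (b - z) * deriv Φ z - a * Φ z

lemma continuous_kummerOperator {Φ : ℝ → ℝ} (hΦ : ContDiff ℝ 2 Φ) (a b : ℝ) :
    Continuous (kummerOperator a b Φ) := by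
  have hΦ' : ContDiff ℝ 1 (deriv Φ) := hΦ.deriv'
  have : Continuous (deriv (deriv Φ)) := hΦ'.continuous_deriv le_rfl
  have : Continuous (deriv Φ) := hΦ'.continuous
  have : Continuous Φ := hΦ.continuous
  unfold kummerOperator
  fun_prop

lemma hasDerivAt_neg_cube_div (c v : ℝ) :
    HasDerivAt (fun v' => -(v' ^ 3) / c) (-(3 * v ^ 2) / c) v := by
  simpa using (hasDerivAt_pow 3 v).neg.div_const c

section SelfSimilar

variable {Φ : ℝ → ℝ} (α : ℝ)

lemma hasDerivAt_selfSimilar_x (hΦ : Differentiable ℝ Φ) (v : ℝ) {x : ℝ} (hx : 0 < x) :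
    HasDerivAt (fun x' => x' ^ α * Φ (-(v ^ 3) / (9 * x')))
      (x ^ (α - 1) * (α * Φ (-(v ^ 3) / (9 * x))
        - -(v ^ 3) / (9 * x) * deriv Φ (-(v ^ 3) / (9 * x)))) x := by
  have hz : HasDerivAt (fun x' => -(v ^ 3) / (9 * x')) (v ^ 3 / (9 * x ^ 2)) x := by
    refine ((hasDerivAt_const x (-(v ^ 3))).div ((hasDerivAt_id x).const_mul 9)
      (by positivity)).congr_deriv ?_
    simp only [id]
    field_simp
    ring
  refine ((Real.hasDerivAt_rpow_const (p := α) (Or.inl hx.ne')).fun_mul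
    ((hΦ _).hasDerivAt.comp x hz)).congr_deriv ?_
  rw [Function.comp_apply, Real.rpow_sub_one hx.ne']
  field_simp
  ring

lemma hasDerivAt_selfSimilar_v (hΦ : Differentiable ℝ Φ) (x v : ℝ) :
    HasDerivAt (fun v' => x ^ α * Φ (-(v' ^ 3) / (9 * x)))
      (-(x ^ α * v ^ 2 / (3 * x)) * deriv Φ (-(v ^ 3) / (9 * x))) v := by
  refine (((hΦ _).hasDerivAt.comp v (hasDerivAt_neg_cube_div (9 * x) v)).const_mul
    (x ^ α)).congr_deriv ?_
  ring

lemma deriv_deriv_selfSimilar_v (hΦ : Differentiable ℝ Φ) (hΦ' : Differentiable ℝ (deriv Φ))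
    {x : ℝ} (hx : 0 < x) (v : ℝ) :
    deriv (deriv fun v' => x ^ α * Φ (-(v' ^ 3) / (9 * x))) v
      = x ^ (α - 1) * (-(2 * v / 3) * deriv Φ (-(v ^ 3) / (9 * x))
          - v * (-(v ^ 3) / (9 * x)) * deriv (deriv Φ) (-(v ^ 3) / (9 * x))) := by
  have hc : HasDerivAt (fun v' => -(x ^ α * v' ^ 2 / (3 * x)))
      (-(x ^ α * (2 * v) / (3 * x))) v := by
    simpa using (((hasDerivAt_pow 2 v).const_mul (x ^ α)).div_const (3 * x)).fun_neg
  rw [funext (fun v' => (hasDerivAt_selfSimilar_v α hΦ x v').deriv)]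
  refine (hc.fun_mul
    ((hΦ' _).hasDerivAt.comp v (hasDerivAt_neg_cube_div (9 * x) v))).deriv.trans ?_
  rw [Function.comp_apply, Real.rpow_sub_one hx.ne']
  field_simp
  ring

lemma selfSimilar_fokkerPlanck_residual (hΦ : Differentiable ℝ Φ)
    (hΦ' : Differentiable ℝ (deriv Φ)) {x : ℝ} (hx : 0 < x) (v : ℝ) :
    v * deriv (fun x' => x' ^ α * Φ (-(v ^ 3) / (9 * x'))) x
        - deriv (deriv fun v' => x ^ α * Φ (-(v' ^ 3) / (9 * x))) v
      = v * x ^ (α - 1) * kummerOperator (-α) (2 / 3) Φ (-(v ^ 3) / (9 * x)) := by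
  rw [(hasDerivAt_selfSimilar_x α hΦ v hx).deriv, deriv_deriv_selfSimilar_v α hΦ hΦ' hx,
    kummerOperator]
  ring

end SelfSimilar

/-- Self-similar reduction of the stationary kinetic Fokker–Planck equation:
`F(x,v) = x^α Φ(-v³/(9x))` satisfies `v F_x = F_vv` on `{x > 0}` if and only if
`Φ` satisfies Kummer's equation `z Φ'' + (2/3 - z) Φ' + α Φ = 0`. -/
theorem stmt_9 (α : ℝ) (Φ : ℝ → ℝ) (hΦ : ContDiff ℝ 2 Φ)
    (F : ℝ → ℝ → ℝ)
    (hF : ∀ x v : ℝ, 0 < x → F x v = x ^ α * Φ (-(v ^ 3) / (9 * x))) :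
    (∀ x v : ℝ, 0 < x →
        v * deriv (fun x' => F x' v) x = deriv (deriv (fun v' => F x v')) v) ↔
      (∀ z : ℝ, z * deriv (deriv Φ) z + (2 / 3 - z) * deriv Φ z + α * Φ z = 0) := by
  have hΦ' : ContDiff ℝ 1 (deriv Φ) := hΦ.deriv'
  have pde_iff : ∀ x v, 0 < x →
      (v * deriv (fun x' => F x' v) x = deriv (deriv fun v' => F x v') v ↔
        v * x ^ (α - 1) * kummerOperator (-α) (2 / 3) Φ (-(v ^ 3) / (9 * x)) = 0) := by
    intro x v hx
    have hFx : (fun x' => F x' v) =ᶠ[𝓝 x] fun x' => x' ^ α * Φ (-(v ^ 3) / (9 * x')) :=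
      (eventually_gt_nhds hx).mono fun x' hx' => hF x' v hx'
    rw [hFx.deriv_eq, funext fun v' => hF x v' hx, ← sub_eq_zero,
      selfSimilar_fokkerPlanck_residual α (hΦ.differentiable two_ne_zero)
        (hΦ'.differentiable one_ne_zero) hx]
  have kummer_iff : ∀ z, z * deriv (deriv Φ) z + (2 / 3 - z) * deriv Φ z + α * Φ z = 0 ↔
      kummerOperator (-α) (2 / 3) Φ z = 0 := by
    intro z
    rw [kummerOperator, neg_mul, sub_neg_eq_add]
  simp only [kummer_iff]
  constructor
  · intro h
    refine congrFun ((continuous_kummerOperator hΦ _ _).ext_on (dense_compl_singleton 0)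
      continuous_const fun z (hz : z ≠ 0) => ?_)
    have hx : 0 < z ^ 2 / 9 := by positivity
    have hzv : -((-z) ^ 3) / (9 * (z ^ 2 / 9)) = z := by field_simp
    have h₀ := (pde_iff _ (-z) hx).mp (h _ _ hx)
    rw [hzv] at h₀
    exact (mul_eq_zero.mp h₀).resolve_left
      (mul_ne_zero (neg_ne_zero.mpr hz) (Real.rpow_pos_of_pos hx _).ne')
  · intro h x v hx
    exact (pde_iff x v hx).mpr (by rw [h, mul_zero])
end

section
/- Let $f : \overline{\Omega} \to [0,\infty)$, $\Omega = (0,1)\times\mathbb{R}$, satisfy: (a) $f(x,v) \le C(|x|^{\alpha} + |v|^{3\alpha})$ for $|x| + |v|^3 \le \delta_0^3$ (with $f(0,0)=0$), and (b) the weighted gradient bound $(|x| + |v|^3)|\partial_x f| + (|x|+|v|^3)^{1/3}|\partial_v f| \le C\,(|x|+|v|^3)^{\alpha}$ whenever $0 < |x| + |v|^3 \le \delta_0^3$, where $0 < \alpha < 1/6$. Then $f$ is Hölder continuous near $(0,0)$: there is a constant $C' > 0$ such that $|f(x_1,v_1) - f(x_2,v_2)| \le C'(|x_1 - x_2|^{\alpha}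 + |v_1 - v_2|^{3\alpha})$ for all $(x_1,v_1),(x_2,v_2)$ with $|x_i| + |v_i|^3 \le \delta_0^3$. -/
/-!
Measure points by the kinetic gauge `ρ(x, v) = |x| + |v|³`; it is a quasi-norm,
`ρ(p + q) ≤ 4 (ρ p + ρ q)`. Let `D = ρ(p₁ - p₂)` and `M = max (ρ p₁) (ρ p₂)`.

If `M ≤ 8 D`, then `0 ≤ f pᵢ ≤ 2 C (ρ pᵢ)^α ≤ 16 C D^α`, and `D^α ≤ |Δx|^α + |Δv|^{3α}`.

If `8 D < M`, the quasi-triangle inequality keeps `ρ ≥ K := M / 8 > D` on the whole box spanned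
by the two points, so there `|∂ₓf| ≤ C K^{α-1}` and `|∂ᵥf| ≤ C K^{α-1/3}`. For `x₁ ≤ x₂`, the path
`(x₁, v₁) → (x₁, v₂) → (x₂, v₂)` also keeps `ρ ≤ M ≤ δ₀³`, and the mean value theorem on its two
legs gives `C (K^{α-1} |Δx| + K^{α-1/3} |Δv|) ≤ C (|Δx|^α + |Δv|^{3α})`, since `|Δx|, |Δv|³ ≤ K`.
-/

open Set

def kineticGauge (x v : ℝ) : ℝ := |x| + |v| ^ 3

lemma kineticGauge_nonneg (x v : ℝ) : 0 ≤ kineticGauge x v := by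
  unfold kineticGauge; positivity

lemma kineticGauge_mono {x v y w : ℝ} (hx : |x| ≤ |y|) (hv : |v| ≤ |w|) :
    kineticGauge x v ≤ kineticGauge y w := by
  unfold kineticGauge; gcongr

lemma kineticGauge_sub_comm (x y v w : ℝ) :
    kineticGauge (x - y) (v - w) = kineticGauge (y - x) (w - v) := by
  simp only [kineticGauge, abs_sub_comm]

lemma kineticGauge_add_le (x y v w : ℝ) :
    kineticGauge (x + y) (v + w) ≤ 4 * (kineticGauge x v + kineticGauge y w) := by
  have hv : |v + w| ^ 3 ≤ 4 * (|v| ^ 3 + |w| ^ 3) :=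
    (pow_le_pow_left₀ (abs_nonneg _) (abs_add_le v w) 3).trans
      ((add_pow_le (abs_nonneg v) (abs_nonneg w) 3).trans_eq (by norm_num))
  unfold kineticGauge
  linarith [abs_add_le x y, abs_nonneg x, abs_nonneg y]

lemma abs_rpow_three_mul (v α : ℝ) : |v| ^ (3 * α) = (|v| ^ 3) ^ α := by
  simpa using Real.rpow_natCast_mul (abs_nonneg v) 3 α

lemma kineticGauge_rpow_le {α : ℝ} (hα0 : 0 ≤ α) (hα1 : α ≤ 1) (x v : ℝ) :
    kineticGauge x v ^ α ≤ |x| ^ α + |v| ^ (3 * α) := by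
  rw [abs_rpow_three_mul]
  exact Real.rpow_add_le_add_rpow (abs_nonneg x) (by positivity) hα0 hα1

lemma add_rpow_le_two_mul_kineticGauge_rpow {α : ℝ} (hα0 : 0 ≤ α) (x v : ℝ) :
    |x| ^ α + |v| ^ (3 * α) ≤ 2 * kineticGauge x v ^ α := by
  have hx : |x| ^ α ≤ kineticGauge x v ^ α :=
    Real.rpow_le_rpow (abs_nonneg x) (le_add_of_nonneg_right (by positivity)) hα0
  have hv : (|v| ^ 3) ^ α ≤ kineticGauge x v ^ α :=
    Real.rpow_le_rpow (by positivity) (le_add_of_nonneg_left (abs_nonneg x)) hα0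
  rw [abs_rpow_three_mul]
  linarith

lemma max_kineticGauge_le_of_mem_uIcc {x₁ v₁ x₂ v₂ x v : ℝ} (hx : x ∈ uIcc x₁ x₂)
    (hv : v ∈ uIcc v₁ v₂) :
    max (kineticGauge x₁ v₁) (kineticGauge x₂ v₂) ≤
      4 * (kineticGauge x v + kineticGauge (x₁ - x₂) (v₁ - v₂)) := by
  have key : ∀ y w, |y - x| ≤ |x₁ - x₂| → |w - v| ≤ |v₁ - v₂| →
      kineticGauge y w ≤ 4 * (kineticGauge x v + kineticGauge (x₁ - x₂) (v₁ - v₂)) := by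
    intro y w hy hw
    calc kineticGauge y w = kineticGauge (x + (y - x)) (v + (w - v)) := by
          simp only [add_sub_cancel]
      _ ≤ 4 * (kineticGauge x v + kineticGauge (y - x) (w - v)) := kineticGauge_add_le ..
      _ ≤ _ := by gcongr; exact kineticGauge_mono hy hw
  refine max_le (key _ _ ?_ ?_) (key _ _ ?_ ?_)
  · rw [abs_sub_comm, abs_sub_comm x₁]; exact abs_sub_left_of_mem_uIcc hx
  · rw [abs_sub_comm, abs_sub_comm v₁]; exact abs_sub_left_of_mem_uIcc hv
  · rw [abs_sub_comm x₁]; exact abs_sub_right_of_mem_uIcc hx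
  · rw [abs_sub_comm v₁]; exact abs_sub_right_of_mem_uIcc hv

lemma rpow_sub_one_mul_le_rpow {t K β : ℝ} (ht : 0 ≤ t) (htK : t ≤ K) (hβ : β ≤ 1) :
    K ^ (β - 1) * t ≤ t ^ β := by
  rcases ht.eq_or_lt with rfl | ht
  · simpa using Real.rpow_nonneg le_rfl β
  calc K ^ (β - 1) * t ≤ t ^ (β - 1) * t :=
        mul_le_mul_of_nonneg_right (Real.rpow_le_rpow_of_nonpos ht htK (by linarith)) ht.le
    _ = t ^ β := by rw [← Real.rpow_add_one ht.ne', sub_add_cancel]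

lemma rpow_sub_one_third_mul_le_rpow {t K β : ℝ} (ht : 0 ≤ t) (htK : t ^ 3 ≤ K)
    (hβ : β ≤ 1 / 3) : K ^ (β - 1 / 3) * t ≤ t ^ (3 * β) := by
  have hK : 0 ≤ K := (pow_nonneg ht 3).trans htK
  have ht' : t ≤ K ^ (1 / 3 : ℝ) := by
    rw [one_div, Real.le_rpow_inv_iff_of_pos ht hK (by norm_num)]
    exact_mod_cast htK
  calc K ^ (β - 1 / 3) * t = (K ^ (1 / 3 : ℝ)) ^ (3 * β - 1) * t := by
        rw [← Real.rpow_mul hK]; ring_nf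
    _ ≤ t ^ (3 * β) := rpow_sub_one_mul_le_rpow ht ht' (by linarith)

lemma le_mul_rpow_sub_of_rpow_mul_le {ρ K γ α C a : ℝ} (hK : 0 < K) (hKρ : K ≤ ρ)
    (hαγ : α ≤ γ) (hC : 0 ≤ C) (h : ρ ^ γ * a ≤ C * ρ ^ α) : a ≤ C * K ^ (α - γ) := by
  have hρ : 0 < ρ := hK.trans_le hKρ
  calc a ≤ C * ρ ^ α / ρ ^ γ := by rw [le_div_iff₀ (by positivity)]; linarith
    _ = C * ρ ^ (α - γ) := by rw [Real.rpow_sub hρ, mul_div_assoc]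
    _ ≤ C * K ^ (α - γ) :=
        mul_le_mul_of_nonneg_left (Real.rpow_le_rpow_of_nonpos hK hKρ (by linarith)) hC

lemma abs_le_of_weighted_le {ρ K α C a b : ℝ} (hK : 0 < K) (hKρ : K ≤ ρ) (hα : α ≤ 1 / 3)
    (hC : 0 ≤ C) (h : ρ * |a| + ρ ^ ((1 : ℝ) / 3) * |b| ≤ C * ρ ^ α) :
    |a| ≤ C * K ^ (α - 1) ∧ |b| ≤ C * K ^ (α - 1 / 3) := by
  have hρ : 0 < ρ := hK.trans_le hKρ
  have ha : 0 ≤ ρ * |a| := by positivity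
  have hb : 0 ≤ ρ ^ ((1 : ℝ) / 3) * |b| := by positivity
  refine ⟨le_mul_rpow_sub_of_rpow_mul_le hK hKρ (by linarith) hC ?_,
    le_mul_rpow_sub_of_rpow_mul_le hK hKρ hα hC (by linarith)⟩
  rw [Real.rpow_one]; linarith

lemma abs_sub_le_of_hasDerivAt_uIcc {g g' : ℝ → ℝ} {a b B : ℝ}
    (hg : ∀ t ∈ uIcc a b, HasDerivAt g (g' t) t) (hB : ∀ t ∈ uIcc a b, |g' t| ≤ B) :
    |g a - g b| ≤ B * |a - b| :=
  (convex_uIcc a b).norm_image_sub_le_of_norm_hasDerivWithin_le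
    (fun t ht => (hg t ht).hasDerivWithinAt) hB right_mem_uIcc left_mem_uIcc

lemma abs_sub_le_of_partials_le {f fx fv : ℝ → ℝ → ℝ} {x₁ v₁ x₂ v₂ A B : ℝ}
    (hv : ∀ v ∈ uIcc v₁ v₂, HasDerivAt (f x₁ ·) (fv x₁ v) v ∧ |fv x₁ v| ≤ B)
    (hx : ∀ x ∈ uIcc x₁ x₂, HasDerivAt (f · v₂) (fx x v₂) x ∧ |fx x v₂| ≤ A) :
    |f x₁ v₁ - f x₂ v₂| ≤ A * |x₁ - x₂| + B * |v₁ - v₂| := by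
  have h₁ : |f x₁ v₁ - f x₁ v₂| ≤ B * |v₁ - v₂| :=
    abs_sub_le_of_hasDerivAt_uIcc (fun v hv' => (hv v hv').1) (fun v hv' => (hv v hv').2)
  have h₂ : |f x₁ v₂ - f x₂ v₂| ≤ A * |x₁ - x₂| :=
    abs_sub_le_of_hasDerivAt_uIcc (fun x hx' => (hx x hx').1) (fun x hx' => (hx x hx').2)
  linarith [abs_sub_le (f x₁ v₁) (f x₁ v₂) (f x₂ v₂)]

lemma abs_sub_le_of_max_kineticGauge_le {α C a b x₁ v₁ x₂ v₂ : ℝ} (hα0 : 0 ≤ α) (hα1 : α ≤ 1)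
    (hC : 0 ≤ C) (ha0 : 0 ≤ a) (ha : a ≤ C * (|x₁| ^ α + |v₁| ^ (3 * α)))
    (hb0 : 0 ≤ b) (hb : b ≤ C * (|x₂| ^ α + |v₂| ^ (3 * α)))
    (hnear : max (kineticGauge x₁ v₁) (kineticGauge x₂ v₂) ≤
      8 * kineticGauge (x₁ - x₂) (v₁ - v₂)) :
    |a - b| ≤ 16 * C * (|x₁ - x₂| ^ α + |v₁ - v₂| ^ (3 * α)) := by
  set D := kineticGauge (x₁ - x₂) (v₁ - v₂)
  have h8 : (8 : ℝ) ^ α ≤ 8 := by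
    simpa using Real.rpow_le_rpow_of_exponent_le (by norm_num : (1 : ℝ) ≤ 8) hα1
  have hD : (8 * D) ^ α ≤ 8 * (|x₁ - x₂| ^ α + |v₁ - v₂| ^ (3 * α)) := by
    rw [Real.mul_rpow (by norm_num) (kineticGauge_nonneg _ _)]
    exact mul_le_mul h8 (kineticGauge_rpow_le hα0 hα1 _ _)
      (Real.rpow_nonneg (kineticGauge_nonneg _ _) _) (by norm_num)
  have hamp : ∀ y w, kineticGauge y w ≤ 8 * D →
      C * (|y| ^ α + |w| ^ (3 * α)) ≤ 16 * C * (|x₁ - x₂| ^ α + |v₁ - v₂| ^ (3 * α)) := by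
    intro y w hyw
    have := kineticGauge_nonneg y w
    calc C * (|y| ^ α + |w| ^ (3 * α)) ≤ C * (2 * kineticGauge y w ^ α) := by
          gcongr; exact add_rpow_le_two_mul_kineticGauge_rpow hα0 y w
      _ ≤ C * (2 * (8 * D) ^ α) := by gcongr
      _ ≤ _ := by nlinarith
  exact abs_sub_le_of_nonneg_of_le ha0 (ha.trans (hamp _ _ (le_of_max_le_left hnear)))
    hb0 (hb.trans (hamp _ _ (le_of_max_le_right hnear)))

section FarFromOrigin

variable {α δ₀ C : ℝ} {f fx fv : ℝ → ℝ → ℝ}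

lemma abs_sub_le_of_le_of_lt_max_kineticGauge (hα : α ≤ 1 / 3) (hC : 0 ≤ C)
    (hderx : ∀ x v : ℝ, 0 ≤ x → x ≤ 1 → 0 < kineticGauge x v → kineticGauge x v ≤ δ₀ ^ 3 →
      HasDerivAt (fun x' => f x' v) (fx x v) x)
    (hderv : ∀ x v : ℝ, 0 ≤ x → x ≤ 1 → 0 < kineticGauge x v → kineticGauge x v ≤ δ₀ ^ 3 →
      HasDerivAt (fun v' => f x v') (fv x v) v)
    (hgrad : ∀ x v : ℝ, 0 ≤ x → x ≤ 1 → 0 < kineticGauge x v → kineticGauge x v ≤ δ₀ ^ 3 →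
      kineticGauge x v * |fx x v| + kineticGauge x v ^ ((1 : ℝ) / 3) * |fv x v| ≤
        C * kineticGauge x v ^ α)
    {x₁ v₁ x₂ v₂ : ℝ} (hx₁ : 0 ≤ x₁) (hx₁₂ : x₁ ≤ x₂) (hx₂ : x₂ ≤ 1)
    (h₁ : kineticGauge x₁ v₁ ≤ δ₀ ^ 3) (h₂ : kineticGauge x₂ v₂ ≤ δ₀ ^ 3)
    (hfar : 8 * kineticGauge (x₁ - x₂) (v₁ - v₂) <
      max (kineticGauge x₁ v₁) (kineticGauge x₂ v₂)) :
    |f x₁ v₁ - f x₂ v₂| ≤ C * (|x₁ - x₂| ^ α + |v₁ - v₂| ^ (3 * α)) := by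
  set D := kineticGauge (x₁ - x₂) (v₁ - v₂)
  set K := max (kineticGauge x₁ v₁) (kineticGauge x₂ v₂) / 8 with hK_def
  have hDK : D < K := by linarith
  have hK : 0 < K := (kineticGauge_nonneg _ _).trans_lt hDK
  have hbox : ∀ x ∈ uIcc x₁ x₂, ∀ v ∈ uIcc v₁ v₂, kineticGauge x v ≤ δ₀ ^ 3 →
      (HasDerivAt (f · v) (fx x v) x ∧ |fx x v| ≤ C * K ^ (α - 1)) ∧
        (HasDerivAt (f x ·) (fv x v) v ∧ |fv x v| ≤ C * K ^ (α - 1 / 3)) := by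
    intro x hx v hv hδ
    rw [uIcc_of_le hx₁₂] at hx
    have hx0 : 0 ≤ x := hx₁.trans hx.1
    have hx1 : x ≤ 1 := hx.2.trans hx₂
    have hKx : K ≤ kineticGauge x v := by
      linarith [max_kineticGauge_le_of_mem_uIcc (Icc_subset_uIcc hx) hv]
    have hpos : 0 < kineticGauge x v := hK.trans_le hKx
    obtain ⟨hfx, hfv⟩ := abs_le_of_weighted_le hK hKx hα hC (hgrad x v hx0 hx1 hpos hδ)
    exact ⟨⟨hderx x v hx0 hx1 hpos hδ, hfx⟩, hderv x v hx0 hx1 hpos hδ, hfv⟩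
  have hvert : ∀ v ∈ uIcc v₁ v₂, kineticGauge x₁ v ≤ δ₀ ^ 3 := by
    intro v hv
    have habs : |v| ≤ max |v₁| |v₂| := by
      rcases mem_uIcc.1 hv with h | h
      · exact abs_le_max_abs_abs h.1 h.2
      · exact max_comm |v₂| |v₁| ▸ abs_le_max_abs_abs h.1 h.2
    rcases le_max_iff.1 habs with h | h
    · exact (kineticGauge_mono le_rfl h).trans h₁
    · exact (kineticGauge_mono (abs_le_abs_of_nonneg hx₁ hx₁₂) h).trans h₂
  have hhor : ∀ x ∈ uIcc x₁ x₂, kineticGauge x v₂ ≤ δ₀ ^ 3 := by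
    intro x hx
    rw [uIcc_of_le hx₁₂] at hx
    exact (kineticGauge_mono (abs_le_abs_of_nonneg (hx₁.trans hx.1) hx.2) le_rfl).trans h₂
  have hΔx : |x₁ - x₂| ≤ K := (le_add_of_nonneg_right (by positivity)).trans hDK.le
  have hΔv : |v₁ - v₂| ^ 3 ≤ K := (le_add_of_nonneg_left (abs_nonneg _)).trans hDK.le
  calc |f x₁ v₁ - f x₂ v₂| ≤ C * K ^ (α - 1) * |x₁ - x₂| + C * K ^ (α - 1 / 3) * |v₁ - v₂| :=
        abs_sub_le_of_partials_le
          (fun v hv => (hbox x₁ left_mem_uIcc v hv (hvert v hv)).2)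
          (fun x hx => (hbox x hx v₂ right_mem_uIcc (hhor x hx)).1)
    _ = C * (K ^ (α - 1) * |x₁ - x₂| + K ^ (α - 1 / 3) * |v₁ - v₂|) := by ring
    _ ≤ C * (|x₁ - x₂| ^ α + |v₁ - v₂| ^ (3 * α)) := by
        gcongr
        · exact rpow_sub_one_mul_le_rpow (abs_nonneg _) hΔx (by linarith)
        · exact rpow_sub_one_third_mul_le_rpow (abs_nonneg _) hΔv hα

lemma abs_sub_le_of_lt_max_kineticGauge (hα : α ≤ 1 / 3) (hC : 0 ≤ C)
    (hderx : ∀ x v : ℝ, 0 ≤ x → x ≤ 1 → 0 < kineticGauge x v → kineticGauge x v ≤ δ₀ ^ 3 →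
      HasDerivAt (fun x' => f x' v) (fx x v) x)
    (hderv : ∀ x v : ℝ, 0 ≤ x → x ≤ 1 → 0 < kineticGauge x v → kineticGauge x v ≤ δ₀ ^ 3 →
      HasDerivAt (fun v' => f x v') (fv x v) v)
    (hgrad : ∀ x v : ℝ, 0 ≤ x → x ≤ 1 → 0 < kineticGauge x v → kineticGauge x v ≤ δ₀ ^ 3 →
      kineticGauge x v * |fx x v| + kineticGauge x v ^ ((1 : ℝ) / 3) * |fv x v| ≤
        C * kineticGauge x v ^ α)
    {x₁ v₁ x₂ v₂ : ℝ} (hx₁ : 0 ≤ x₁) (hx₁1 : x₁ ≤ 1) (hx₂ : 0 ≤ x₂) (hx₂1 : x₂ ≤ 1)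
    (h₁ : kineticGauge x₁ v₁ ≤ δ₀ ^ 3) (h₂ : kineticGauge x₂ v₂ ≤ δ₀ ^ 3)
    (hfar : 8 * kineticGauge (x₁ - x₂) (v₁ - v₂) <
      max (kineticGauge x₁ v₁) (kineticGauge x₂ v₂)) :
    |f x₁ v₁ - f x₂ v₂| ≤ C * (|x₁ - x₂| ^ α + |v₁ - v₂| ^ (3 * α)) := by
  rcases le_total x₁ x₂ with h | h
  · exact abs_sub_le_of_le_of_lt_max_kineticGauge hα hC hderx hderv hgrad hx₁ h hx₂1 h₁ h₂ hfar
  · rw [abs_sub_comm, abs_sub_comm x₁, abs_sub_comm v₁]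
    rw [kineticGauge_sub_comm, max_comm] at hfar
    exact abs_sub_le_of_le_of_lt_max_kineticGauge hα hC hderx hderv hgrad hx₂ h hx₁1 h₂ h₁ hfar

end FarFromOrigin

theorem stmt_19_general (α δ₀ C : ℝ) (hα0 : 0 < α) (hα : α < 1/6) (hC : 0 < C)
    (f fx fv : ℝ → ℝ → ℝ)
    (hnn : ∀ x v : ℝ, 0 ≤ x → x ≤ 1 → 0 ≤ f x v)
    (hamp : ∀ x v : ℝ, 0 ≤ x → x ≤ 1 → |x| + |v| ^ 3 ≤ δ₀ ^ 3 →
      f x v ≤ C * (|x| ^ α + |v| ^ (3 * α)))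
    (hderx : ∀ x v : ℝ, 0 ≤ x → x ≤ 1 → 0 < |x| + |v| ^ 3 → |x| + |v| ^ 3 ≤ δ₀ ^ 3 →
      HasDerivAt (fun x' => f x' v) (fx x v) x)
    (hderv : ∀ x v : ℝ, 0 ≤ x → x ≤ 1 → 0 < |x| + |v| ^ 3 → |x| + |v| ^ 3 ≤ δ₀ ^ 3 →
      HasDerivAt (fun v' => f x v') (fv x v) v)
    (hgrad : ∀ x v : ℝ, 0 ≤ x → x ≤ 1 → 0 < |x| + |v| ^ 3 → |x| + |v| ^ 3 ≤ δ₀ ^ 3 →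
      (|x| + |v| ^ 3) * |fx x v| + (|x| + |v| ^ 3) ^ ((1:ℝ)/3) * |fv x v| ≤
        C * (|x| + |v| ^ 3) ^ α) :
    ∃ C' : ℝ, 0 < C' ∧ ∀ x₁ v₁ x₂ v₂ : ℝ,
      0 ≤ x₁ → x₁ ≤ 1 → 0 ≤ x₂ → x₂ ≤ 1 →
      |x₁| + |v₁| ^ 3 ≤ δ₀ ^ 3 → |x₂| + |v₂| ^ 3 ≤ δ₀ ^ 3 →
      |f x₁ v₁ - f x₂ v₂| ≤ C' * (|x₁ - x₂| ^ α + |v₁ - v₂| ^ (3 * α)) := by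
  refine ⟨16 * C, by positivity, fun x₁ v₁ x₂ v₂ hx₁ hx₁1 hx₂ hx₂1 h₁ h₂ => ?_⟩
  rcases le_or_gt (max (kineticGauge x₁ v₁) (kineticGauge x₂ v₂))
      (8 * kineticGauge (x₁ - x₂) (v₁ - v₂)) with hnear | hfar
  · exact abs_sub_le_of_max_kineticGauge_le hα0.le (by linarith) hC.le (hnn x₁ v₁ hx₁ hx₁1)
      (hamp x₁ v₁ hx₁ hx₁1 h₁) (hnn x₂ v₂ hx₂ hx₂1) (hamp x₂ v₂ hx₂ hx₂1 h₂) hnear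
  · have hE : 0 ≤ C * (|x₁ - x₂| ^ α + |v₁ - v₂| ^ (3 * α)) := by positivity
    calc |f x₁ v₁ - f x₂ v₂| ≤ C * (|x₁ - x₂| ^ α + |v₁ - v₂| ^ (3 * α)) :=
          abs_sub_le_of_lt_max_kineticGauge (by linarith) hC.le hderx hderv hgrad
            hx₁ hx₁1 hx₂ hx₂1 h₁ h₂ hfar
      _ ≤ 16 * C * (|x₁ - x₂| ^ α + |v₁ - v₂| ^ (3 * α)) := by linarith

/-- Anisotropic Hölder continuity near the singular point `(0,0)`: a power-law
amplitude bound plus weighted gradient bounds imply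
`|f(x₁,v₁) - f(x₂,v₂)| ≤ C'(|x₁-x₂|^α + |v₁-v₂|^{3α})` near `(0,0)`. -/
theorem stmt_19 (α δ₀ C : ℝ) (hα0 : 0 < α) (hα : α < 1/6) (hδ₀ : 0 < δ₀) (hC : 0 < C)
    (f fx fv : ℝ → ℝ → ℝ)
    (hnn : ∀ x v : ℝ, 0 ≤ x → x ≤ 1 → 0 ≤ f x v)
    (hf00 : f 0 0 = 0)
    (hamp : ∀ x v : ℝ, 0 ≤ x → x ≤ 1 → |x| + |v| ^ 3 ≤ δ₀ ^ 3 →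
      f x v ≤ C * (|x| ^ α + |v| ^ (3 * α)))
    (hderx : ∀ x v : ℝ, 0 ≤ x → x ≤ 1 → 0 < |x| + |v| ^ 3 → |x| + |v| ^ 3 ≤ δ₀ ^ 3 →
      HasDerivAt (fun x' => f x' v) (fx x v) x)
    (hderv : ∀ x v : ℝ, 0 ≤ x → x ≤ 1 → 0 < |x| + |v| ^ 3 → |x| + |v| ^ 3 ≤ δ₀ ^ 3 →
      HasDerivAt (fun v' => f x v') (fv x v) v)
    (hgrad : ∀ x v : ℝ, 0 ≤ x → x ≤ 1 → 0 < |x| + |v| ^ 3 → |x| + |v| ^ 3 ≤ δ₀ ^ 3 →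
      (|x| + |v| ^ 3) * |fx x v| + (|x| + |v| ^ 3) ^ ((1:ℝ)/3) * |fv x v| ≤
        C * (|x| + |v| ^ 3) ^ α) :
    ∃ C' : ℝ, 0 < C' ∧ ∀ x₁ v₁ x₂ v₂ : ℝ,
      0 ≤ x₁ → x₁ ≤ 1 → 0 ≤ x₂ → x₂ ≤ 1 →
      |x₁| + |v₁| ^ 3 ≤ δ₀ ^ 3 → |x₂| + |v₂| ^ 3 ≤ δ₀ ^ 3 →
      |f x₁ v₁ - f x₂ v₂| ≤ C' * (|x₁ - x₂| ^ α + |v₁ - v₂| ^ (3 * α)) :=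
  stmt_19_general α δ₀ C hα0 hα hC f fx fv hnn hamp hderx hderv hgrad
end
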